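/- arXiv:2209.05614 — 10 statements merged into one kernel-verified Lean document; each statement's English description precedes it below -/
import Mathlib

section
/- If p is prime and N is a power of p, then there exists a family of N vectors in (Z/pZ)^(p·log_p(N)) such that for any two distinct vectors v, w in the family and every s in Z/pZ, there exists a coordinate i with v_i - w_i = s (mod p). -/
/-!
Embed `K^m` into `K^(K × Fin m)` by sending `x` to the vector of all its scalar multiples
`c • x`, `c ∈ K`. If `x ≠ y` differ at `j`, then `x j - y j` is invertible, so the block
scaled by `c = s / (x j - y j)` has `c * x j - c * y j = s` at position `j`. For `K = ZMod p`
this block vector has length `p * m`.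
-/

/-- The paper's `S`-covering families, for `S` the whole group `G`. -/
def IsCoveringFamily {ι G : Type*} [AddGroup G] (F : Set (ι → G)) : Prop :=
  F.Pairwise fun v w => ∀ s : G, ∃ i, v i - w i = s

theorem IsCoveringFamily.image_comp {ι κ G : Type*} [AddGroup G] {F : Set (ι → G)}
    (hF : IsCoveringFamily F) {e : κ → ι} (he : Function.Surjective e) :
    IsCoveringFamily ((· ∘ e) '' F) := by
  rintro _ ⟨v, hv, rfl⟩ _ ⟨w, hw, rfl⟩ hvw s
  obtain ⟨i, hi⟩ := hF hv hw (fun h => hvw (h ▸ rfl)) s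
  obtain ⟨k, rfl⟩ := he i
  exact ⟨k, hi⟩

section ScaledCopies

variable {K ι : Type*}

def scaledCopies [Mul K] (x : ι → K) : K × ι → K :=
  fun c => c.1 * x c.2

theorem scaledCopies_injective [MulOneClass K] :
    Function.Injective (scaledCopies : (ι → K) → K × ι → K) := fun x y hxy =>
  funext fun j => by simpa [scaledCopies] using congrFun hxy (1, j)

theorem isCoveringFamily_range_scaledCopies [DivisionRing K] :
    IsCoveringFamily (Set.range (scaledCopies : (ι → K) → K × ι → K)) := by
  rintro _ ⟨x, rfl⟩ _ ⟨y, rfl⟩ hxy s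
  obtain ⟨j, hj⟩ := Function.ne_iff.mp (fun h => hxy (congrArg scaledCopies h))
  refine ⟨(s * (x j - y j)⁻¹, j), ?_⟩
  simp only [scaledCopies, ← mul_sub, mul_assoc, inv_mul_cancel₀ (sub_ne_zero.mpr hj), mul_one]

end ScaledCopies

/-- If `p` is prime and `N = p ^ m` is a power of `p`, there is a family of `N` vectors
in `(ZMod p)^(p * m)` (note `m = log_p N`) such that any two distinct vectors `v, w`
and every `s : ZMod p` admit a coordinate `i` with `v i - w i = s`. -/
theorem stmt0 (p m : ℕ) (hp : p.Prime) :
    ∃ F : Finset (Fin (p * m) → ZMod p),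
      F.card = p ^ m ∧
      ∀ v ∈ F, ∀ w ∈ F, v ≠ w → ∀ s : ZMod p, ∃ i, v i - w i = s := by
  have : Fact p.Prime := ⟨hp⟩
  let e : Fin (p * m) ≃ ZMod p × Fin m := Fintype.equivOfCardEq (by simp [ZMod.card])
  have hinj : Function.Injective fun x : Fin m → ZMod p => scaledCopies x ∘ e :=
    e.surjective.injective_comp_right.comp scaledCopies_injective
  refine ⟨Finset.univ.image fun x => scaledCopies x ∘ e, ?_, ?_⟩
  · simp [Finset.card_image_of_injective _ hinj, ZMod.card]
  · have hcov := isCoveringFamily_range_scaledCopies.image_comp e.surjective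
    rw [← Set.range_comp] at hcov
    intro v hv w hw
    exact hcov (by simpa using hv) (by simpa using hw)
end

section
/- Let p ≥ 7 be prime, let x be the largest integer at most p/4 - 1, and suppose F ⊆ (Z/pZ)^ℓ is a Z/pZ-covering family of size N. Then for every z ∈ (Z/pZ)^ℓ, there is at most one vector v ∈ F such that z_i - v_i ∈ {-x,...,x} (mod p) for all coordinates i. Consequently N ≤ (p/(2x+1))^ℓ, and hence ℓ ≥ log N / log(2 + 12/(p-6)). -/
/-!
Take `x` with `4x + 1 < p`. If `v ≠ w` both lie within `x` of `z` in every coordinate, all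
differences `v i - w i` are residues of integers in `[-2x, 2x]`, so the covering property fails
for `s = 2x + 1`. Hence the boxes of side `2x + 1` around the members of `F` are disjoint, which
gives `|F| (2x + 1)^ℓ ≤ p^ℓ`; for `x = ⌊p/4⌋ - 1` the ratio `p / (2x + 1)` is at most
`2p / (p - 6) = 2 + 12 / (p - 6)`.
-/

open Finset

section Covering

variable {ι : Type*} {n : ℕ}

def IsZModCovering (F : Finset (ι → ZMod n)) : Prop :=
  ∀ v ∈ F, ∀ w ∈ F, v ≠ w → ∀ s : ZMod n, ∃ i, v i - w i = s

def WithinDist (x : ℕ) (z v : ι → ZMod n) : Prop :=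
  ∀ i, ∃ j : ℤ, |j| ≤ (x : ℤ) ∧ z i - v i = (j : ZMod n)

lemma ZMod.intCast_eq_intCast_of_abs_sub_lt {a b : ℤ} (hab : |a - b| < n)
    (h : (a : ZMod n) = b) : a = b :=
  sub_eq_zero.mp <| Int.eq_zero_of_abs_lt_dvd
    ((ZMod.intCast_eq_intCast_iff_dvd_sub b a n).mp h.symm) hab

theorem IsZModCovering.eq_of_withinDist {F : Finset (ι → ZMod n)} (hF : IsZModCovering F)
    {x : ℕ} (hx : 4 * x + 1 < n) {z v w : ι → ZMod n} (hv : v ∈ F) (hw : w ∈ F)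
    (hzv : WithinDist x z v) (hzw : WithinDist x z w) : v = w := by
  by_contra hne
  obtain ⟨i, hi⟩ := hF v hv w hw hne ((2 * x + 1 : ℤ) : ZMod n)
  obtain ⟨j, hj, hzvi⟩ := hzv i
  obtain ⟨k, hk, hzwi⟩ := hzw i
  have hdiff : ((2 * x + 1 : ℤ) : ZMod n) = ((k - j : ℤ) : ZMod n) := by
    rw [← hi, Int.cast_sub, ← hzvi, ← hzwi]; ring
  rw [abs_le] at hj hk
  have := ZMod.intCast_eq_intCast_of_abs_sub_lt (by rw [abs_lt]; omega) hdiff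
  omega

variable [Fintype ι] [DecidableEq ι]

theorem card_mul_pow_le_of_withinDist_subsingleton [NeZero n] {F : Finset (ι → ZMod n)} {x : ℕ}
    (hx : 2 * x < n)
    (hF : ∀ z, ∀ v ∈ F, ∀ w ∈ F, WithinDist x z v → WithinDist x z w → v = w) :
    #F * (2 * x + 1) ^ Fintype.card ι ≤ n ^ Fintype.card ι := by
  let box : Finset (ι → ℤ) := Fintype.piFinset fun _ ↦ Icc (-(x : ℤ)) x
  have hbox : #box = (2 * x + 1) ^ Fintype.card ι := by
    simp only [box, Fintype.card_piFinset, Int.card_Icc, prod_const, card_univ]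
    congr 1; omega
  have hwithin {v : ι → ZMod n} {j : ι → ℤ} (hj : j ∈ box) :
      WithinDist x (fun i ↦ v i + (j i : ZMod n)) v := fun i ↦
    ⟨j i, abs_le.mpr (Finset.mem_Icc.mp (Fintype.mem_piFinset.mp hj i)), by ring⟩
  rw [← hbox, ← card_product]
  refine (card_le_card_of_injOn (fun q i ↦ q.1 i + (q.2 i : ZMod n)) (fun _ _ ↦ mem_univ _)
    ?_).trans_eq (by simp)
  rintro ⟨v, j⟩ hvj ⟨w, k⟩ hwk hsum
  simp only [coe_product, Set.mem_prod, mem_coe] at hvj hwk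
  dsimp only at hsum
  have hvw : v = w := hF _ v hvj.1 w hwk.1 (hwithin hvj.2) (hsum ▸ hwithin hwk.2)
  subst hvw
  refine Prod.ext rfl (funext fun i ↦ ?_)
  show j i = k i
  have hj := Finset.mem_Icc.mp (Fintype.mem_piFinset.mp hvj.2 i)
  have hk := Finset.mem_Icc.mp (Fintype.mem_piFinset.mp hwk.2 i)
  exact ZMod.intCast_eq_intCast_of_abs_sub_lt (by rw [abs_lt]; omega)
    (add_left_cancel (congrFun hsum i))

end Covering

lemma div_two_mul_add_one_le_two_add_twelve_div {p : ℕ} (hp : 7 ≤ p) :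
    (p : ℝ) / (2 * ((p / 4 - 1 : ℕ) : ℝ) + 1) ≤ 2 + 12 / ((p : ℝ) - 6) := by
  have hx : (p : ℝ) ≤ 4 * ((p / 4 - 1 : ℕ) : ℝ) + 7 := by
    exact_mod_cast (by omega : p ≤ 4 * (p / 4 - 1) + 7)
  have hp6 : (0 : ℝ) < p - 6 := by
    have : (7 : ℝ) ≤ p := by exact_mod_cast hp
    linarith
  rw [show (2 : ℝ) + 12 / (p - 6) = 2 * p / (p - 6) by field_simp; ring,
    div_le_div_iff₀ (by positivity) hp6]
  nlinarith

lemma Real.log_div_log_le_of_le_pow {a b : ℝ} {ℓ : ℕ} (ha : 0 ≤ a) (hb : 1 < b)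
    (h : a ≤ b ^ ℓ) : Real.log a / Real.log b ≤ ℓ := by
  have hlogb := Real.log_pos hb
  rw [div_le_iff₀ hlogb, ← Real.log_pow]
  rcases ha.eq_or_lt with rfl | ha
  · simpa using Real.log_nonneg (one_le_pow₀ hb.le)
  · exact Real.log_le_log ha h

theorem stmt2_general (p ℓ N : ℕ) (hp7 : 7 ≤ p)
    (F : Finset (Fin ℓ → ZMod p)) (hcard : F.card = N)
    (hcov : ∀ v ∈ F, ∀ w ∈ F, v ≠ w → ∀ s : ZMod p, ∃ i, v i - w i = s) :
    (∀ z : Fin ℓ → ZMod p, ∀ v ∈ F, ∀ w ∈ F,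
        (∀ i, ∃ j : ℤ, |j| ≤ ((p / 4 - 1 : ℕ) : ℤ) ∧ z i - v i = (j : ZMod p)) →
        (∀ i, ∃ j : ℤ, |j| ≤ ((p / 4 - 1 : ℕ) : ℤ) ∧ z i - w i = (j : ZMod p)) → v = w) ∧
    (N : ℝ) ≤ ((p : ℝ) / (2 * ((p / 4 - 1 : ℕ) : ℝ) + 1)) ^ ℓ ∧
    Real.log N / Real.log (2 + 12 / ((p : ℝ) - 6)) ≤ (ℓ : ℝ) := by
  have : NeZero p := ⟨by omega⟩
  have unique : ∀ z, ∀ v ∈ F, ∀ w ∈ F,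
      WithinDist (p / 4 - 1) z v → WithinDist (p / 4 - 1) z w → v = w :=
    fun _ _ hv _ hw ↦ IsZModCovering.eq_of_withinDist hcov (by omega) hv hw
  have hcount := card_mul_pow_le_of_withinDist_subsingleton (by omega) unique
  rw [Fintype.card_fin, hcard] at hcount
  have hbound : (N : ℝ) ≤ ((p : ℝ) / (2 * ((p / 4 - 1 : ℕ) : ℝ) + 1)) ^ ℓ := by
    rw [div_pow, le_div_iff₀ (by positivity)]
    exact_mod_cast hcount
  have hbase : 1 < 2 + 12 / ((p : ℝ) - 6) := by
    have h7 : (7 : ℝ) ≤ p := by exact_mod_cast hp7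
    have : (0 : ℝ) < 12 / ((p : ℝ) - 6) := div_pos (by norm_num) (by linarith)
    linarith
  have hratio := div_two_mul_add_one_le_two_add_twelve_div hp7
  exact ⟨unique, hbound, Real.log_div_log_le_of_le_pow N.cast_nonneg hbase <|
    hbound.trans (pow_le_pow_left₀ (by positivity) hratio ℓ)⟩

/-- Lower bound for `ZMod p`-covering families: with `x` the largest integer at most
`p/4 - 1`, (a) for every `z` at most one `v ∈ F` is within `{-x,…,x}` of `z` in every
coordinate, (b) `N ≤ (p/(2x+1))^ℓ`, and (c) `ℓ ≥ log N / log (2 + 12/(p-6))`. -/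
theorem stmt2 (p ℓ N : ℕ) (hp : p.Prime) (hp7 : 7 ≤ p)
    (F : Finset (Fin ℓ → ZMod p)) (hcard : F.card = N)
    (hcov : ∀ v ∈ F, ∀ w ∈ F, v ≠ w → ∀ s : ZMod p, ∃ i, v i - w i = s) :
    (∀ z : Fin ℓ → ZMod p, ∀ v ∈ F, ∀ w ∈ F,
        (∀ i, ∃ j : ℤ, |j| ≤ ((p / 4 - 1 : ℕ) : ℤ) ∧ z i - v i = (j : ZMod p)) →
        (∀ i, ∃ j : ℤ, |j| ≤ ((p / 4 - 1 : ℕ) : ℤ) ∧ z i - w i = (j : ZMod p)) → v = w) ∧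
    (N : ℝ) ≤ ((p : ℝ) / (2 * ((p / 4 - 1 : ℕ) : ℝ) + 1)) ^ ℓ ∧
    Real.log N / Real.log (2 + 12 / ((p : ℝ) - 6)) ≤ (ℓ : ℝ) :=
  stmt2_general p ℓ N hp7 F hcard hcov
end

section
/- If there exists a Z/pZ-covering family of N vectors in (Z/pZ)^ℓ, then the graph consisting of N disjoint cliques each of size p has product dimension at most ℓ; that is, there exist ℓ proper vertex colorings (each with p colors) such that any two non-adjacent vertices share a color in at least one of the colorings. -/
def shiftColoring {ι κ G : Type*} [Add G] (F : ι → κ → G) (k : κ) (v : ι × G) : G :=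
  F v.1 k + v.2

section ShiftColoring

variable {ι κ G : Type*}

theorem shiftColoring_ne_of_fst_eq [AddLeftCancelSemigroup G] (F : ι → κ → G) (k : κ)
    {u v : ι × G} (hfst : u.1 = v.1) (hne : u ≠ v) : shiftColoring F k u ≠ shiftColoring F k v := by
  obtain ⟨j, x⟩ := u
  obtain ⟨j', y⟩ := v
  dsimp only at hfst
  subst hfst
  intro h
  exact hne (Prod.ext rfl (add_left_cancel h))

theorem exists_shiftColoring_eq_of_covering [AddCommGroup G] {F : ι → κ → G} {j j' : ι}
    (hcov : ∀ s : G, ∃ k, F j k - F j' k = s) (x x' : G) :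
    ∃ k, shiftColoring F k (j, x) = shiftColoring F k (j', x') := by
  obtain ⟨k, hk⟩ := hcov (x' - x)
  rw [sub_eq_sub_iff_add_eq_add] at hk
  exact ⟨k, hk.trans (add_comm x' _)⟩

end ShiftColoring

theorem stmt3_general (p ℓ N : ℕ) (F : Fin N → Fin ℓ → ZMod p)
    (hcov : ∀ j j' : Fin N, j ≠ j' → ∀ s : ZMod p, ∃ i, F j i - F j' i = s) :
    ∃ c : Fin ℓ → (Fin N × ZMod p) → ZMod p,
      (∀ k, ∀ u v : Fin N × ZMod p, u.1 = v.1 → u ≠ v → c k u ≠ c k v) ∧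
      (∀ u v : Fin N × ZMod p, u ≠ v → u.1 ≠ v.1 → ∃ k, c k u = c k v) :=
  ⟨shiftColoring F, fun k _ _ => shiftColoring_ne_of_fst_eq F k,
    fun u v _ hfst => exists_shiftColoring_eq_of_covering (hcov u.1 v.1 hfst) u.2 v.2⟩

/-- A `ZMod p`-covering family of `N` vectors in `(ZMod p)^ℓ` gives `ℓ` proper colorings
of the graph of `N` disjoint `p`-cliques (vertices `Fin N × ZMod p`, adjacency: same
clique and distinct) such that any two non-adjacent vertices share a color somewhere. -/
theorem stmt3 (p ℓ N : ℕ) (hp : p.Prime) (F : Fin N → Fin ℓ → ZMod p)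
    (hinj : Function.Injective F)
    (hcov : ∀ j j' : Fin N, j ≠ j' → ∀ s : ZMod p, ∃ i, F j i - F j' i = s) :
    ∃ c : Fin ℓ → (Fin N × ZMod p) → ZMod p,
      (∀ k, ∀ u v : Fin N × ZMod p, u.1 = v.1 → u ≠ v → c k u ≠ c k v) ∧
      (∀ u v : Fin N × ZMod p, u ≠ v → u.1 ≠ v.1 → ∃ k, c k u = c k v) :=
  stmt3_general p ℓ N F hcov
end

section
/- Let p > k ≥ 2 with p prime. There exists a set S ⊆ Z/pZ with |S| ≤ ⌈p·ln(p)/(k-1)⌉ such that for every g ∈ Z/pZ there exist i ∈ {0,1,...,k-1} and j ∈ S with i·j = g (mod p). -/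
/-!
Pick `T = ⌈p log p / (k - 1)⌉` elements of `ZMod p` independently. A fixed `g ≠ 0` is `i * j`
with `1 ≤ i ≤ k - 1` exactly when `j` lies in the `(k - 1)`-element set `{i⁻¹ g}`, so the
proportion of `T`-tuples missing that set is `(1 - (k - 1) / p) ^ T ≤ exp (-(k - 1) T / p) ≤ 1 / p`.
A union bound over the `p - 1` nonzero `g` leaves a tuple hitting every such set, and `g = 0`
is covered by `i = 0`. We count tuples instead of computing probabilities.
-/

open Finset

theorem exists_hitting_set_of_card_mul_pow_lt {α ι : Type*} [Fintype α] [DecidableEq α]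
    (s : Finset ι) (B : ι → Finset α) {m T : ℕ} (hB : ∀ i ∈ s, m ≤ #(B i))
    (hcount : #s * (Fintype.card α - m) ^ T < Fintype.card α ^ T) :
    ∃ S : Finset α, #S ≤ T ∧ ∀ i ∈ s, ∃ x ∈ S, x ∈ B i := by
  set avoiding : ι → Finset (Fin T → α) := fun i => Fintype.piFinset fun _ => (B i)ᶜ
  have hbad : #(s.biUnion avoiding) < #(univ : Finset (Fin T → α)) :=
    calc #(s.biUnion avoiding)
        ≤ ∑ i ∈ s, #(avoiding i) := card_biUnion_le
      _ ≤ ∑ i ∈ s, (Fintype.card α - m) ^ T := sum_le_sum fun i hi => by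
          simp only [avoiding, Fintype.card_piFinset, card_compl, prod_const, card_univ,
            Fintype.card_fin]
          gcongr
          exact hB i hi
      _ = #s * (Fintype.card α - m) ^ T := by rw [sum_const, smul_eq_mul]
      _ < Fintype.card α ^ T := hcount
      _ = #(univ : Finset (Fin T → α)) := by simp
  obtain ⟨f, -, hf⟩ := exists_mem_notMem_of_card_lt_card hbad
  refine ⟨univ.image f, card_image_le.trans (card_fin T).le, fun i hi => ?_⟩
  have hfi : f ∉ avoiding i := fun h => hf (mem_biUnion.2 ⟨i, hi, h⟩)
  simp only [avoiding, Fintype.mem_piFinset, mem_compl, not_forall, not_not] at hfi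
  obtain ⟨t, ht⟩ := hfi
  exact ⟨f t, mem_image_of_mem f (mem_univ t), ht⟩

theorem pred_mul_sub_pow_lt_pow {n m T : ℕ} (hm : 0 < m) (hmn : m ≤ n)
    (hT : (n : ℝ) * Real.log n / m ≤ T) : (n - 1) * (n - m) ^ T < n ^ T := by
  have hn : (0 : ℝ) < n := by exact_mod_cast hm.trans_le hmn
  have hm' : (0 : ℝ) < m := by exact_mod_cast hm
  have hlog : Real.log n ≤ T * (m / n) := by
    rw [div_le_iff₀ hm'] at hT
    rw [mul_div_assoc', le_div_iff₀ hn]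
    linarith
  have hdecay : (1 - m / n : ℝ) ^ T ≤ (n : ℝ)⁻¹ :=
    calc (1 - m / n : ℝ) ^ T
        ≤ Real.exp (-(m / n)) ^ T := by
          refine pow_le_pow_left₀ ?_ (Real.one_sub_le_exp_neg _) T
          rw [sub_nonneg, div_le_one hn]
          exact_mod_cast hmn
      _ = Real.exp (-(T * (m / n))) := by rw [← Real.exp_nat_mul, mul_neg]
      _ ≤ Real.exp (-Real.log n) := Real.exp_le_exp.2 (neg_le_neg hlog)
      _ = (n : ℝ)⁻¹ := by rw [Real.exp_neg, Real.exp_log hn]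
  have hpos : (0 : ℝ) < (n : ℝ) ^ T * (n : ℝ)⁻¹ := by positivity
  suffices ((n : ℝ) - 1) * ((n : ℝ) - m) ^ T < (n : ℝ) ^ T by
    rw [← Nat.cast_lt (α := ℝ)]
    push_cast [Nat.cast_sub (hm.trans_le hmn), Nat.cast_sub hmn]
    exact this
  calc ((n : ℝ) - 1) * ((n : ℝ) - m) ^ T
      = ((n : ℝ) - 1) * ((n : ℝ) ^ T * (1 - m / n) ^ T) := by
        rw [← mul_pow, mul_sub, mul_one, mul_div_cancel₀ _ hn.ne']
    _ ≤ ((n : ℝ) - 1) * ((n : ℝ) ^ T * (n : ℝ)⁻¹) := by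
        have : (1 : ℝ) ≤ n := by exact_mod_cast hm.trans_le hmn
        gcongr
    _ = (n : ℝ) ^ T - (n : ℝ) ^ T * (n : ℝ)⁻¹ := by field_simp
    _ < (n : ℝ) ^ T := sub_lt_self _ hpos

theorem ZMod.card_image_inv_natCast_mul {p : ℕ} [Fact p.Prime] {m : ℕ} (hm : m < p)
    {g : ZMod p} (hg : g ≠ 0) : #((Icc 1 m).image fun i : ℕ => (i : ZMod p)⁻¹ * g) = m := by
  rw [card_image_of_injOn, Nat.card_Icc, add_tsub_cancel_right]
  intro a ha b hb hab
  have hcast : (a : ZMod p) = b := inv_injective (mul_right_cancel₀ hg hab)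
  rw [coe_Icc, Set.mem_Icc] at ha hb
  rwa [ZMod.natCast_eq_natCast_iff', Nat.mod_eq_of_lt (by omega), Nat.mod_eq_of_lt (by omega)]
    at hcast

/-- There is a set `S ⊆ ZMod p` with `|S| ≤ ⌈p ln p / (k-1)⌉` such that every `g : ZMod p`
is `i * j` for some `0 ≤ i ≤ k - 1` and `j ∈ S`. -/
theorem stmt7 (p k : ℕ) (hp : p.Prime) (hk : 2 ≤ k) (hkp : k < p) :
    ∃ S : Finset (ZMod p),
      S.card ≤ ⌈(p : ℝ) * Real.log p / ((k : ℝ) - 1)⌉₊ ∧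
      ∀ g : ZMod p, ∃ i : ℕ, i ≤ k - 1 ∧ ∃ j ∈ S, (i : ZMod p) * j = g := by
  have := Fact.mk hp
  set T := ⌈(p : ℝ) * Real.log p / ((k : ℝ) - 1)⌉₊
  have hcount : #(univ.erase (0 : ZMod p)) * (Fintype.card (ZMod p) - (k - 1)) ^ T
      < Fintype.card (ZMod p) ^ T := by
    rw [card_erase_of_mem (mem_univ _), card_univ, ZMod.card]
    refine pred_mul_sub_pow_lt_pow (by omega) (by omega) ?_
    rw [Nat.cast_sub (by omega : 1 ≤ k), Nat.cast_one]
    exact Nat.le_ceil _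
  obtain ⟨S, hS, hhit⟩ := exists_hitting_set_of_card_mul_pow_lt (univ.erase 0)
    (fun g => (Icc 1 (k - 1)).image fun i : ℕ => (i : ZMod p)⁻¹ * g)
    (fun g hg => (ZMod.card_image_inv_natCast_mul (by omega) (ne_of_mem_erase hg)).ge) hcount
  refine ⟨S, hS, fun g => ?_⟩
  obtain rfl | hg := eq_or_ne g 0
  · obtain ⟨j, hj, -⟩ := hhit 1 (by simp)
    exact ⟨0, Nat.zero_le _, j, hj, by simp⟩
  · obtain ⟨j, hj, hjB⟩ := hhit g (by simpa using hg)
    obtain ⟨i, hi, rfl⟩ := mem_image.1 hjB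
    rw [mem_Icc] at hi
    have hi0 : (i : ZMod p) ≠ 0 :=
      (ZMod.natCast_eq_zero_iff i p).not.2 (Nat.not_dvd_of_pos_of_lt hi.1 (by omega))
    exact ⟨i, hi.2, _, hj, mul_inv_cancel_left₀ hi0 g⟩
end

section
/- Let p be prime and let F₂ ⊆ (Z/pZ)^{ℓ₂} be a [0,k-1]-covering family of size N with k ≥ 2, and let S ⊆ Z/pZ satisfy: for all g ∈ Z/pZ there exist i ∈ [0,k-1] and s ∈ S with i·s = g (mod p). Then the family F₃ = {(s₁·v, ..., s_{|S|}·v) : v ∈ F₂} ⊆ (Z/pZ)^{|S|·ℓ₂}, where s₁,...,s_{|S|} enumerate S, is Z/pZ-covering and has size N. -/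
/-!
Multiplying a difference `v a - w a = t` by `s` gives the difference `t * s` of the scaled
vectors at coordinate `(s, a)`; since every `g` has the form `t * s` with `t ∈ T` and `s ∈ S`,
the scaled family covers every element. Covering `1` in particular separates the images of
distinct vectors, so scaling is injective on the family.
-/

open scoped Pointwise

section

variable {ι R : Type*} [CommRing R]

def IsCovering (F : Finset (ι → R)) (T : Set R) : Prop :=
  ∀ v ∈ F, ∀ w ∈ F, v ≠ w → ∀ t ∈ T, ∃ a, v a - w a = t

def scaleByEach (S : Finset R) (v : ι → R) : S × ι → R :=
  fun q => q.1 * v q.2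

variable {F : Finset (ι → R)} {T : Set R} {S : Finset R}

theorem exists_scaleByEach_sub_eq (hF : IsCovering F T) (hTS : T * (S : Set R) = Set.univ)
    {v w : ι → R} (hv : v ∈ F) (hw : w ∈ F) (hvw : v ≠ w) (g : R) :
    ∃ q, scaleByEach S v q - scaleByEach S w q = g := by
  obtain ⟨t, ht, s, hs, rfl⟩ := Set.mem_mul.mp (hTS ▸ Set.mem_univ g)
  obtain ⟨a, ha⟩ := hF v hv w hw hvw t ht
  exact ⟨(⟨s, hs⟩, a), by simp only [scaleByEach, ← mul_sub, ha, mul_comm]⟩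

theorem injOn_scaleByEach (hF : IsCovering F T) (hTS : T * (S : Set R) = Set.univ) :
    Set.InjOn (scaleByEach S) (F : Set (ι → R)) := by
  intro v hv w hw hvw
  by_contra hne
  cases subsingleton_or_nontrivial R
  · exact hne (Subsingleton.elim v w)
  obtain ⟨q, hq⟩ := exists_scaleByEach_sub_eq hF hTS hv hw hne 1
  rw [hvw, sub_self] at hq
  exact zero_ne_one hq

theorem isCovering_image_scaleByEach [DecidableEq (S × ι → R)] (hF : IsCovering F T) (hTS : T * (S : Set R) = Set.univ) :
    IsCovering (F.image (scaleByEach S)) Set.univ := by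
  rintro _ hu _ hu' huu' g -
  obtain ⟨v, hv, rfl⟩ := Finset.mem_image.mp hu
  obtain ⟨w, hw, rfl⟩ := Finset.mem_image.mp hu'
  exact exists_scaleByEach_sub_eq hF hTS hv hw (fun h => huu' (congrArg _ h)) g

end

theorem stmt9_general (p k ℓ₂ N : ℕ)
    (F₂ : Finset (Fin ℓ₂ → ZMod p)) (hcard : F₂.card = N)
    (hcov : ∀ v ∈ F₂, ∀ w ∈ F₂, v ≠ w → ∀ i : ℕ, i ≤ k - 1 → ∃ a, v a - w a = (i : ZMod p))
    (S : Finset (ZMod p))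
    (hS : ∀ g : ZMod p, ∃ i : ℕ, i ≤ k - 1 ∧ ∃ s ∈ S, (i : ZMod p) * s = g) :
    (F₂.image fun v => fun q : {x // x ∈ S} × Fin ℓ₂ => (q.1 : ZMod p) * v q.2).card = N ∧
    ∀ u ∈ F₂.image fun v => fun q : {x // x ∈ S} × Fin ℓ₂ => (q.1 : ZMod p) * v q.2,
      ∀ u' ∈ F₂.image fun v => fun q : {x // x ∈ S} × Fin ℓ₂ => (q.1 : ZMod p) * v q.2,
        u ≠ u' → ∀ t : ZMod p, ∃ q, u q - u' q = t := by
  set T : Set (ZMod p) := Nat.cast '' Set.Iic (k - 1)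
  have hF : IsCovering F₂ T := by
    rintro v hv w hw hvw _ ⟨i, hi, rfl⟩
    exact hcov v hv w hw hvw i hi
  have hTS : T * (S : Set (ZMod p)) = Set.univ := Set.eq_univ_of_forall fun g => by
    obtain ⟨i, hi, s, hs, rfl⟩ := hS g
    exact Set.mul_mem_mul ⟨i, hi, rfl⟩ hs
  exact ⟨(Finset.card_image_of_injOn (injOn_scaleByEach hF hTS)).trans hcard,
    fun u hu u' hu' huu' t => isCovering_image_scaleByEach hF hTS u hu u' hu' huu' t trivial⟩

/-- If `F₂` is `[0,k-1]`-covering of size `N` (`k ≥ 2`) and `S` satisfies that every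
`g : ZMod p` is `i * s` with `0 ≤ i ≤ k-1`, `s ∈ S`, then the family
`{(s·v)_{s ∈ S} : v ∈ F₂}` is `ZMod p`-covering of size `N`. -/
theorem stmt9 (p k ℓ₂ N : ℕ) (hp : p.Prime) (hk : 2 ≤ k)
    (F₂ : Finset (Fin ℓ₂ → ZMod p)) (hcard : F₂.card = N)
    (hcov : ∀ v ∈ F₂, ∀ w ∈ F₂, v ≠ w → ∀ i : ℕ, i ≤ k - 1 → ∃ a, v a - w a = (i : ZMod p))
    (S : Finset (ZMod p))
    (hS : ∀ g : ZMod p, ∃ i : ℕ, i ≤ k - 1 ∧ ∃ s ∈ S, (i : ZMod p) * s = g) :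
    (F₂.image fun v => fun q : {x // x ∈ S} × Fin ℓ₂ => (q.1 : ZMod p) * v q.2).card = N ∧
    ∀ u ∈ F₂.image fun v => fun q : {x // x ∈ S} × Fin ℓ₂ => (q.1 : ZMod p) * v q.2,
      ∀ u' ∈ F₂.image fun v => fun q : {x // x ∈ S} × Fin ℓ₂ => (q.1 : ZMod p) * v q.2,
        u ≠ u' → ∀ t : ZMod p, ∃ q, u q - u' q = t :=
  stmt9_general p k ℓ₂ N F₂ hcard hcov S hS
end

section
/- Let G = (L ∪ R, E) be a bipartite graph in which every vertex of L has degree exactly d_L and every vertex of R has degree exactly d_R, with d_R ≥ log₂(2|R|) > 0. Then there exists a subset of E that is a union of vertex-disjoint stars with centers in L, each star having at least d_L / (4·log₂(2|R|)) leaves, such that every vertex of R is a leaf of some star. -/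
/-!
Put each vertex of `L` into a random set `S` independently with probability
`p = ln(2|R|) / d_R`. For fixed `r ∈ R`, `P(N(r) ∩ S = ∅) = (1-p)^{d_R} < 1/(2|R|)`, and Markov's
inequality for `2^{|N(r) ∩ S|}`, whose mean is `(1+p)^{d_R} ≤ 2|R|`, gives
`P(|N(r) ∩ S| > k) ≤ 1/(2|R|)` once `2^{k+1} ≥ (2|R|)^2`. By the union bound some `S` meets
every neighbourhood in between `1` and `k` vertices. Giving each centre in `S` `s` copies with
`s k ≤ d_L`, Hall's condition holds by double counting, so each centre gets `s` private leaves;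
the remaining vertices of `R` join any neighbouring centre in `S`. Choosing
`s = ⌈d_L / (4 log₂(2|R|))⌉` makes `k = ⌊d_L / s⌋` large enough when `d_L > 4 log₂(2|R|)`;
otherwise the bound is at most `1` and any choice of neighbours works.
-/

open Finset

/-- `p ^ #S * (1 - p) ^ #Sᶜ` is the probability of `S` when every vertex is kept independently
with probability `p`, so this is the probability generating function of `#(N ∩ S)`. -/
theorem sum_pow_card_mul_pow_card_compl_mul_pow_card_inter {L : Type*} [Fintype L] [DecidableEq L]
    (p x : ℝ) (N : Finset L) :
    ∑ S : Finset L, p ^ #S * (1 - p) ^ #Sᶜ * x ^ #(N ∩ S) = (1 - p + p * x) ^ #N := by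
  have factor (S : Finset L) : p ^ #S * (1 - p) ^ #Sᶜ * x ^ #(N ∩ S) =
      (∏ u ∈ S, p * if u ∈ N then x else 1) * ∏ _u ∈ Sᶜ, (1 - p) := by
    rw [prod_mul_distrib, prod_ite_mem, inter_comm, prod_const, prod_const, prod_const]
    ring
  have step (u : L) :
      (p * if u ∈ N then x else 1) + (1 - p) = if u ∈ N then 1 - p + p * x else 1 := by
    split_ifs <;> ring
  simp_rw [factor, ← Fintype.prod_add, step, prod_ite_mem, univ_inter, prod_const]

/-- `0 ^ n` is the indicator of `n = 0`, and the second summand is the Markov bound for `k < n`. -/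
theorem one_le_zero_pow_add_two_pow_div {n k : ℕ} (h : n = 0 ∨ k < n) :
    (1 : ℝ) ≤ 0 ^ n + 2 ^ n / 2 ^ (k + 1) := by
  rcases h with rfl | h
  · simp
  · rw [zero_pow (by omega), zero_add, one_le_div (by positivity)]
    exact pow_le_pow_right₀ one_le_two h

theorem exists_forall_not_of_sum_sum_lt_one {ι α : Type*} [Fintype ι] [Fintype α]
    (w : ι → ℝ) (hw : ∀ i, 0 ≤ w i) (hw1 : ∑ i, w i = 1)
    (P : α → ι → Prop) (b : α → ι → ℝ) (hb : ∀ a i, 0 ≤ b a i) (hPb : ∀ a i, P a i → 1 ≤ b a i)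
    (hsum : ∑ a, ∑ i, w i * b a i < 1) : ∃ i, ∀ a, ¬ P a i := by
  by_contra! h
  have hcover (i : ι) : w i ≤ w i * ∑ a, b a i := by
    obtain ⟨a, ha⟩ := h i
    exact le_mul_of_one_le_right (hw i)
      ((hPb a i ha).trans (single_le_sum (fun a _ => hb a i) (mem_univ a)))
  refine lt_irrefl (1 : ℝ) (lt_of_le_of_lt ?_ hsum)
  calc 1 = ∑ i, w i := hw1.symm
    _ ≤ ∑ i, w i * ∑ a, b a i := sum_le_sum fun i _ => hcover i
    _ = ∑ a, ∑ i, w i * b a i := by simp_rw [mul_sum]; exact sum_comm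

theorem exists_finset_forall_inter_nonempty_and_card_inter_le {L R : Type*} [Fintype L]
    [DecidableEq L] [Fintype R] (N : R → Finset L) {p : ℝ} (hp0 : 0 ≤ p) (hp1 : p ≤ 1) (k : ℕ)
    (hsum : ∑ r, ((1 - p) ^ #(N r) + (1 + p) ^ #(N r) / 2 ^ (k + 1)) < 1) :
    ∃ S : Finset L, ∀ r, (N r ∩ S).Nonempty ∧ #(N r ∩ S) ≤ k := by
  obtain ⟨S, hS⟩ := exists_forall_not_of_sum_sum_lt_one (fun S => p ^ #S * (1 - p) ^ #Sᶜ)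
    (fun S => mul_nonneg (pow_nonneg hp0 _) (pow_nonneg (sub_nonneg.2 hp1) _))
    (by simpa using sum_pow_card_mul_pow_card_compl_mul_pow_card_inter p 1 (∅ : Finset L))
    (fun r S => #(N r ∩ S) = 0 ∨ k < #(N r ∩ S))
    (fun r S => (0 : ℝ) ^ #(N r ∩ S) + 2 ^ #(N r ∩ S) / 2 ^ (k + 1))
    (fun r S => by positivity) (fun r S => one_le_zero_pow_add_two_pow_div)
    (by
      simp_rw [mul_add, sum_add_distrib, mul_div_assoc', ← sum_div,
        sum_pow_card_mul_pow_card_compl_mul_pow_card_inter]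
      rw [sum_add_distrib, ← sum_div] at hsum
      simpa only [mul_zero, add_zero, show 1 - p + p * 2 = 1 + p by ring] using hsum)
  refine ⟨S, fun r => ?_⟩
  obtain ⟨hne, hle⟩ := not_or.mp (hS r)
  exact ⟨card_pos.mp (Nat.pos_of_ne_zero hne), not_lt.mp hle⟩

theorem Real.log_le_logb_two {x : ℝ} (hx : 1 ≤ x) : Real.log x ≤ Real.logb 2 x := by
  rw [← Real.log_div_log]
  exact le_div_self (Real.log_nonneg hx) (Real.log_pos one_lt_two)
    (Real.log_two_lt_d9.le.trans (by norm_num))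

theorem sq_le_two_pow_of_two_mul_logb_le {x : ℝ} (hx : 0 < x) {n : ℕ}
    (h : 2 * Real.logb 2 x ≤ n) : x ^ 2 ≤ 2 ^ n := by
  calc x ^ 2 = (2 : ℝ) ^ (Real.logb 2 x * 2) := by
        rw [Real.rpow_mul zero_le_two, Real.rpow_logb two_pos (by norm_num) hx, Real.rpow_two]
    _ ≤ 2 ^ (n : ℝ) := Real.rpow_le_rpow_of_exponent_le one_le_two (by linarith)
    _ = 2 ^ n := Real.rpow_natCast 2 n

theorem exists_one_sub_pow_add_one_add_pow_div_lt {c : ℝ} (hc : 1 < c) {n k : ℕ}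
    (hn : Real.log c ≤ n) (hk : c ^ 2 ≤ 2 ^ (k + 1)) :
    ∃ p : ℝ, 0 ≤ p ∧ p ≤ 1 ∧ (1 - p) ^ n + (1 + p) ^ n / 2 ^ (k + 1) < 2 / c := by
  have hlog : 0 < Real.log c := Real.log_pos hc
  have hn0 : 0 < (n : ℝ) := hlog.trans_le hn
  set p := Real.log c / n
  have hp : 0 < p := div_pos hlog hn0
  have hpn : Real.exp (p * n) = c := by
    rw [div_mul_cancel₀ _ hn0.ne', Real.exp_log (by linarith)]
  refine ⟨p, hp.le, (div_le_one hn0).2 hn, ?_⟩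
  have hlower : (1 - p) ^ n < c⁻¹ := by
    calc (1 - p) ^ n < Real.exp (-p) ^ n :=
          pow_lt_pow_left₀ (by linarith [Real.add_one_lt_exp (neg_ne_zero.2 hp.ne')])
            (sub_nonneg.2 ((div_le_one hn0).2 hn)) (by exact_mod_cast hn0.ne')
      _ = c⁻¹ := by rw [← Real.exp_nat_mul, mul_neg, mul_comm, Real.exp_neg, hpn]
  have hupper : (1 + p) ^ n / 2 ^ (k + 1) ≤ c⁻¹ := by
    calc (1 + p) ^ n / 2 ^ (k + 1) ≤ Real.exp p ^ n / c ^ 2 := by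
          gcongr
          linarith [Real.add_one_le_exp p]
      _ = c⁻¹ := by
          rw [← Real.exp_nat_mul, mul_comm, hpn]
          field_simp
  calc _ < c⁻¹ + c⁻¹ := add_lt_add_of_lt_of_le hlower hupper
    _ = 2 / c := by ring

theorem exists_le_mul_and_two_mul_le_add_one {a : ℝ} (ha : 0 < a) {d : ℕ} (hd : 4 * a < d) :
    ∃ s k : ℕ, d / (4 * a) ≤ s ∧ s * k ≤ d ∧ 2 * a ≤ k + 1 := by
  set s := ⌈d / (4 * a)⌉₊
  have hds : 0 < (d : ℝ) / (4 * a) := div_pos (by linarith) (by linarith)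
  have hs : (s : ℝ) < d / (4 * a) + 1 := Nat.ceil_lt_add_one hds.le
  have hs0 : 0 < s := Nat.ceil_pos.2 hds
  refine ⟨s, d / s, Nat.le_ceil _, Nat.mul_div_le d s, ?_⟩
  have hlt : (d : ℝ) < s * (d / s + 1 : ℕ) := by exact_mod_cast Nat.lt_mul_div_succ d hs0
  have hsa : (s : ℝ) * (2 * a) < d / 2 + 2 * a := by
    calc (s : ℝ) * (2 * a) < (d / (4 * a) + 1) * (2 * a) := by gcongr
      _ = d / 2 + 2 * a := by field_simp; ring
  push_cast at hlt
  by_contra! h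
  nlinarith [show (0 : ℝ) < s by exact_mod_cast hs0]

theorem exists_injective_prod_fin_of_mul_le_card {L R : Type*} [Fintype R]
    (Adj : L → R → Prop) [∀ u r, Decidable (Adj u r)] (S : Finset L) {s k : ℕ} (hk : 0 < k)
    (hL : ∀ u ∈ S, s * k ≤ #{r | Adj u r}) (hR : ∀ r, #{u ∈ S | Adj u r} ≤ k) :
    ∃ g : S × Fin s → R, Function.Injective g ∧ ∀ x, Adj x.1 (g x) := by
  classical
  let nbhd (x : S × Fin s) : Finset R := {r | Adj x.1 r}
  suffices hall : ∀ A : Finset (S × Fin s), #A ≤ #(A.biUnion nbhd) by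
    obtain ⟨g, hg, hadj⟩ := (all_card_le_biUnion_card_iff_exists_injective nbhd).1 hall
    exact ⟨g, hg, fun x => (mem_filter.1 (hadj x)).2⟩
  intro A
  set D : Finset L := A.image fun x => (x.1 : L)
  have hAD : #A ≤ s * #D := by
    refine card_le_mul_card_image A s fun u _ => ?_
    calc #{x ∈ A | (x.1 : L) = u} ≤ #(univ : Finset (Fin s)) :=
          card_le_card_of_injOn Prod.snd (fun _ _ => mem_univ _) fun x hx y hy hxy =>
            Prod.ext (Subtype.ext ((mem_filter.1 hx).2.trans (mem_filter.1 hy).2.symm)) hxy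
      _ = s := by simp
  have hDS : D ⊆ S := by
    intro u hu
    obtain ⟨x, -, rfl⟩ := mem_image.1 hu
    exact x.1.2
  have hcount : #D * (s * k) ≤ #(A.biUnion nbhd) * k := by
    refine card_mul_le_card_mul Adj (fun u hu => ?_) fun r _ => ?_
    · obtain ⟨x, hx, rfl⟩ := mem_image.1 hu
      refine (hL _ x.1.2).trans (card_le_card fun r hr => ?_)
      exact (mem_bipartiteAbove Adj).2 ⟨mem_biUnion.2 ⟨x, hx, hr⟩, (mem_filter.1 hr).2⟩
    · exact (card_le_card (filter_subset_filter _ hDS)).trans (hR r)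
  have : #D * s ≤ #(A.biUnion nbhd) :=
    Nat.le_of_mul_le_mul_right (by rw [mul_assoc]; exact hcount) hk
  linarith

theorem exists_star_cover_of_injective {L R : Type*} [Finite R] {Adj : L → R → Prop}
    {S : Finset L} {s : ℕ} (g : S × Fin s → R) (hg : Function.Injective g)
    (hgAdj : ∀ x, Adj x.1 (g x)) (hcover : ∀ r, ∃ u ∈ S, Adj u r) :
    ∃ f : R → L, (∀ r, Adj (f r) r) ∧ ∀ u ∈ Set.range f, s ≤ Nat.card {r // f r = u} := by
  choose center hcenterS hcenterAdj using hcover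
  let f := Function.extend g (fun x => (x.1 : L)) center
  have hf_g (x : S × Fin s) : f (g x) = x.1 := hg.extend_apply _ _ x
  have hf (r : R) : f r ∈ S ∧ Adj (f r) r := by
    by_cases h : ∃ x, g x = r
    · obtain ⟨x, rfl⟩ := h
      exact hf_g x ▸ ⟨x.1.2, hgAdj x⟩
    · rw [show f r = center r from Function.extend_apply' _ _ _ h]
      exact ⟨hcenterS r, hcenterAdj r⟩
  refine ⟨f, fun r => (hf r).2, ?_⟩
  rintro u ⟨r, rfl⟩
  let leaf (i : Fin s) : {r' // f r' = f r} := ⟨g (⟨f r, (hf r).1⟩, i), hf_g _⟩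
  have hleaf : Function.Injective leaf := fun i j hij =>
    congrArg Prod.snd (hg (congrArg Subtype.val hij))
  simpa using Nat.card_le_card_of_injective leaf hleaf

theorem exists_cover_one_le_natCard_fiber {L R : Type*} [Finite R] {Adj : L → R → Prop}
    (h : ∀ r, ∃ u, Adj u r) :
    ∃ f : R → L, (∀ r, Adj (f r) r) ∧ ∀ u ∈ Set.range f, 1 ≤ Nat.card {r // f r = u} := by
  choose f hf using h
  refine ⟨f, hf, ?_⟩
  rintro u ⟨r, rfl⟩
  have : Nonempty {r' // f r' = f r} := ⟨⟨r, rfl⟩⟩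
  exact Nat.card_pos

theorem exists_star_cover_of_log_le_of_sq_le_two_pow {L R : Type*} [Fintype L] [Fintype R]
    [Nonempty R] (Adj : L → R → Prop) [∀ u r, Decidable (Adj u r)] {dR s k : ℕ} (hk : 0 < k)
    (hL : ∀ u, s * k ≤ #{r | Adj u r}) (hR : ∀ r, #{u | Adj u r} = dR)
    (hlog : Real.log (2 * Fintype.card R) ≤ dR)
    (hsq : (2 * Fintype.card R : ℝ) ^ 2 ≤ 2 ^ (k + 1)) :
    ∃ f : R → L, (∀ r, Adj (f r) r) ∧ ∀ u ∈ Set.range f, s ≤ Nat.card {r // f r = u} := by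
  classical
  have hm : (1 : ℝ) ≤ Fintype.card R := by exact_mod_cast Fintype.card_pos
  obtain ⟨p, hp0, hp1, hp⟩ := exists_one_sub_pow_add_one_add_pow_div_lt (by linarith) hlog hsq
  obtain ⟨S, hS⟩ := exists_finset_forall_inter_nonempty_and_card_inter_le
    (fun r => {u | Adj u r}) hp0 hp1 k (by
      simp only [hR, sum_const, card_univ, nsmul_eq_mul]
      calc _ < (Fintype.card R : ℝ) * (2 / (2 * Fintype.card R)) := by gcongr
        _ = 1 := by field_simp)
  obtain ⟨g, hg, hgAdj⟩ := exists_injective_prod_fin_of_mul_le_card Adj S hk (fun u _ => hL u)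
    fun r => by simpa only [inter_comm, inter_filter, inter_univ] using (hS r).2
  refine exists_star_cover_of_injective g hg hgAdj fun r => ?_
  obtain ⟨u, hu⟩ := (hS r).1
  exact ⟨u, (mem_inter.1 hu).2, (mem_filter.1 (mem_inter.1 hu).1).2⟩

/-- Alon–Alweiss Lemma 2.1: in a biregular bipartite graph with `L`-degree `d_L`,
`R`-degree `d_R ≥ log₂(2|R|) > 0`, there is a union of vertex-disjoint stars with
centers in `L`, each with at least `d_L / (4 log₂(2|R|))` leaves, covering all of `R`. -/
theorem stmt14 {L R : Type*} [Fintype L] [Fintype R]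
    (Adj : L → R → Prop) [∀ u r, Decidable (Adj u r)]
    (dL dR : ℕ)
    (hdL : ∀ u : L, (Finset.univ.filter fun r => Adj u r).card = dL)
    (hdR : ∀ r : R, (Finset.univ.filter fun u => Adj u r).card = dR)
    (hpos : 0 < Real.logb 2 (2 * Fintype.card R))
    (hlog : Real.logb 2 (2 * Fintype.card R) ≤ (dR : ℝ)) :
    ∃ f : R → L, (∀ r, Adj (f r) r) ∧
      ∀ u : L, u ∈ Set.range f →
        (dL : ℝ) / (4 * Real.logb 2 (2 * Fintype.card R)) ≤ (Nat.card {r : R // f r = u} : ℝ) := by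
  set lam := Real.logb 2 (2 * Fintype.card R)
  have : Nonempty R :=
    Fintype.card_pos_iff.1 (Nat.pos_of_ne_zero fun h => by simp [lam, h] at hpos)
  have hm : (1 : ℝ) ≤ Fintype.card R := by exact_mod_cast Fintype.card_pos
  have hlam : 1 ≤ lam := by
    simpa using Real.logb_le_logb_of_le (b := 2) one_lt_two two_pos (by linarith : (2 : ℝ) ≤ 2 * _)
  by_cases hsmall : (dL : ℝ) ≤ 4 * lam
  · have hdR0 : 0 < dR := by exact_mod_cast (by linarith : (0 : ℝ) < dR)
    obtain ⟨f, hf, hf1⟩ := exists_cover_one_le_natCard_fiber fun r => by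
      obtain ⟨u, hu⟩ := card_pos.1 (hdR r ▸ hdR0)
      exact ⟨u, (mem_filter.1 hu).2⟩
    exact ⟨f, hf, fun u hu =>
      ((div_le_one (by positivity)).2 hsmall).trans (by exact_mod_cast hf1 u hu)⟩
  obtain ⟨s, k, hs, hsk, hk⟩ := exists_le_mul_and_two_mul_le_add_one (by linarith) (not_le.1 hsmall)
  obtain ⟨f, hf, hfs⟩ := exists_star_cover_of_log_le_of_sq_le_two_pow Adj
    (by exact_mod_cast (by linarith : (0 : ℝ) < k)) (fun u => hdL u ▸ hsk) hdR
    (by linarith [Real.log_le_logb_two (by linarith : (1 : ℝ) ≤ 2 * Fintype.card R)])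
    (sq_le_two_pow_of_two_mul_logb_le (by positivity) (by push_cast; linarith))
  exact ⟨f, hf, fun u hu => hs.trans (by exact_mod_cast hfs u hu)⟩
end

section
/- Let G = (L ∪ R, E) be a bipartite graph in which every vertex of L has degree exactly d_L > 0 and every vertex of R has degree at most d_R (and at least 1). Then there exists a union of vertex-disjoint stars with centers in L, each star having at least ⌊d_L/d_R⌋ leaves, such that every vertex of R is a leaf. -/
/-- Hall's-theorem form of the star lemma: if every `L`-vertex has degree exactly
`d_L > 0` and every `R`-vertex has degree between `1` and `d_R`, then there is a union
of vertex-disjoint stars with centers in `L`, each with at least `⌊d_L/d_R⌋` leaves,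
covering all of `R`. -/
theorem stmt15 {L R : Type*} [Fintype L] [Fintype R]
    (Adj : L → R → Prop) [∀ u r, Decidable (Adj u r)]
    (dL dR : ℕ) (hdLpos : 0 < dL)
    (hdL : ∀ u : L, (Finset.univ.filter fun r => Adj u r).card = dL)
    (hdR : ∀ r : R, (Finset.univ.filter fun u => Adj u r).card ≤ dR)
    (hdR1 : ∀ r : R, 1 ≤ (Finset.univ.filter fun u => Adj u r).card) :
    ∃ f : R → L, (∀ r, Adj (f r) r) ∧
      ∀ u : L, u ∈ Set.range f → dL / dR ≤ Nat.card {r : R // f r = u} := by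
  classical
  set k := dL / dR with hk
  have hall : ∀ s : Finset (L × Fin k),
      s.card ≤ (s.biUnion fun p => Finset.univ.filter fun r => Adj p.1 r).card := by
    intro s
    set S := s.image Prod.fst with hS
    have hB : (s.biUnion fun p => Finset.univ.filter fun r => Adj p.1 r)
        = S.biUnion fun u => Finset.univ.filter fun r => Adj u r := by
      exact (Finset.image_biUnion (f := Prod.fst) (s := s) (t := fun u => Finset.univ.filter fun r => Adj u r)).symm
    rw [hB]
    set B := S.biUnion fun u => Finset.univ.filter fun r => Adj u r with hBdef
    have h1 : s.card ≤ S.card * k := by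
      calc s.card ≤ (S ×ˢ (Finset.univ : Finset (Fin k))).card := by
            apply Finset.card_le_card
            intro p hp
            rw [Finset.mem_product]
            exact ⟨Finset.mem_image_of_mem _ hp, Finset.mem_univ _⟩
        _ = S.card * k := by
            rw [Finset.card_product, Finset.card_univ, Fintype.card_fin]
    have h2 : S.card * dL ≤ B.card * dR := by
      have hsub : ∀ u ∈ S, (Finset.univ.filter fun r => Adj u r) ⊆ B := fun u hu =>
        Finset.subset_biUnion_of_mem (fun u => Finset.univ.filter fun r => Adj u r) hu
      calc S.card * dL = ∑ u ∈ S, (Finset.univ.filter fun r => Adj u r).card := by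
            rw [Finset.sum_congr rfl fun u _ => hdL u, Finset.sum_const, smul_eq_mul]
        _ = ∑ u ∈ S, (B.filter fun r => Adj u r).card := by
            refine Finset.sum_congr rfl fun u hu => ?_
            congr 1
            apply Finset.Subset.antisymm
            · intro r hr
              simp only [Finset.mem_filter] at hr ⊢
              exact ⟨hsub u hu (by simp [hr.2]), hr.2⟩
            · intro r hr
              simp only [Finset.mem_filter] at hr ⊢
              exact ⟨Finset.mem_univ _, hr.2⟩
        _ = ∑ r ∈ B, (S.filter fun u => Adj u r).card := by
            simp only [Finset.card_filter]
            exact Finset.sum_comm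
        _ ≤ ∑ r ∈ B, dR := Finset.sum_le_sum fun r _ =>
            le_trans (Finset.card_le_card
              (Finset.filter_subset_filter _ (Finset.subset_univ S))) (hdR r)
        _ = B.card * dR := by rw [Finset.sum_const, smul_eq_mul]
    rcases Nat.eq_zero_or_pos dR with hdR0 | hdRpos
    · have hk0 : k = 0 := by simp [hk, hdR0]
      exact h1.trans (by rw [hk0]; simp)
    · have h3 : S.card * k * dR ≤ B.card * dR := by
        calc S.card * k * dR = S.card * (k * dR) := by ring
          _ ≤ S.card * dL := Nat.mul_le_mul_left _ (Nat.div_mul_le_self dL dR)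
          _ ≤ B.card * dR := h2
      exact le_trans h1 (Nat.le_of_mul_le_mul_right h3 hdRpos)
  obtain ⟨m, minj, hm⟩ := (Finset.all_card_le_biUnion_card_iff_exists_injective
    (fun p : L × Fin k => Finset.univ.filter fun r => Adj p.1 r)).mp hall
  have hex : ∀ r : R, ∃ u, Adj u r := by
    intro r
    obtain ⟨u, hu⟩ := Finset.card_pos.mp (lt_of_lt_of_le one_pos (hdR1 r))
    exact ⟨u, (Finset.mem_filter.mp hu).2⟩
  choose n hn using hex
  have hmAdj : ∀ p : L × Fin k, Adj p.1 (m p) := fun p => (Finset.mem_filter.mp (hm p)).2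
  refine ⟨fun r => if h : ∃ p, m p = r then h.choose.1 else n r, ?_, ?_⟩
  · intro r
    show Adj (if h : ∃ p, m p = r then h.choose.1 else n r) r
    by_cases h : ∃ p, m p = r
    · rw [dif_pos h]
      have := hmAdj h.choose
      rwa [h.choose_spec] at this
    · rw [dif_neg h]; exact hn r
  · intro u _
    show dL / dR ≤ Nat.card {r : R // (if h : ∃ p, m p = r then h.choose.1 else n r) = u}
    have key : ∀ i : Fin k,
        (if h : ∃ p, m p = m (u, i) then h.choose.1 else n (m (u, i))) = u := by
      intro i
      have h : ∃ p, m p = m (u, i) := ⟨(u, i), rfl⟩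
      rw [dif_pos h]
      have h2 : h.choose = (u, i) := minj h.choose_spec
      rw [h2]
    have inj : Function.Injective (fun i : Fin k =>
        (⟨m (u, i), key i⟩ : {r : R // (if h : ∃ p, m p = r then h.choose.1 else n r) = u})) := by
      intro i j hij
      have h3 : m (u, i) = m (u, j) := congrArg Subtype.val hij
      have := minj h3
      exact (Prod.mk.injEq _ _ _ _ ▸ this : (u = u ∧ i = j)).2
    calc dL / dR = Nat.card (Fin k) := by simp [hk]
      _ ≤ Nat.card {r : R // (if h : ∃ p, m p = r then h.choose.1 else n r) = u} :=
          Nat.card_le_card_of_injective _ inj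
end

section
/- Fix integers z, k, k', p with 2 ≤ k ≤ k' ≤ p, p prime. Any (z,k,k',p)-agnostic concatenation procedure boosts the size by at most 4kz/k'. Concretely: let α₁,...,α_z ∈ Z/pZ be nonzero, let V ⊆ (Z/pZ)^ℓ be a [0,k-1]-covering family all of whose vectors have every coordinate in {0,1,...,2k-1} (mod p), let S' ⊆ Z/pZ \ {0} with |S'| = k', and let V' be any S'-covering subset of W := {(α₁v₁,...,α_z v_z) : v₁,...,v_z ∈ V}. Then |V'| ≤ |V|^{4kz/k'}. -/
/-!
A coordinate of a vector of `V` is the residue of some `n < 2k`, so all differences of coordinates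
within block `j` of `W` lie in `α_j • (-2k, 2k)`, a set of fewer than `4k` residues. Double counting
the pairs `(g, j)` with `g ∈ S'` such that `g` is such a difference in block `j` gives some `g ∈ S'`
occurring in a set `T` of at most `4kz/k'` blocks. Two distinct members of `V'` differ by `g`
somewhere, necessarily in a block of `T`, so `V'` embeds into `V ^ T`.
-/

open Finset

theorem Finset.exists_card_le_forall_coord_sub_mem {κ R : Type*} [Ring R] [DecidableEq R]
    {V : Finset (κ → R)} {m : ℕ} (hV : ∀ v ∈ V, ∀ i, ∃ n : ℕ, n < m ∧ v i = n) :
    ∃ D : Finset R, #D ≤ 2 * m - 1 ∧ ∀ v ∈ V, ∀ w ∈ V, ∀ i, v i - w i ∈ D := by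
  refine ⟨(Ioo (-(m : ℤ)) m).image Int.cast, card_image_le.trans (by rw [Int.card_Ioo]; omega),
    fun v hv w hw i => ?_⟩
  obtain ⟨n, hn, hvn⟩ := hV v hv i
  obtain ⟨n', hn', hwn⟩ := hV w hw i
  exact mem_image.2 ⟨n - n', mem_Ioo.2 ⟨by omega, by omega⟩, by rw [hvn, hwn]; push_cast; rfl⟩

theorem Finset.exists_mem_card_mul_card_filter_mem_le {ι β : Type*} [Fintype ι] [DecidableEq β]
    {s : Finset β} (hs : s.Nonempty) (S : ι → Finset β) {c : ℕ} (hS : ∀ j, #(S j) ≤ c) :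
    ∃ g ∈ s, #s * #{j | g ∈ S j} ≤ Fintype.card ι * c := by
  obtain ⟨g, hg, hmin⟩ := s.exists_min_image (fun g => #{j | g ∈ S j}) hs
  refine ⟨g, hg, ?_⟩
  calc #s * #{j | g ∈ S j} ≤ ∑ g' ∈ s, #{j | g' ∈ S j} := by
        simpa using s.card_nsmul_le_sum _ _ hmin
    _ = ∑ j, #{g' ∈ s | g' ∈ S j} := by simp only [card_filter]; exact sum_comm
    _ ≤ ∑ _j : ι, c :=
        sum_le_sum fun j _ => (card_le_card fun _ hx => (mem_filter.1 hx).2).trans (hS j)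
    _ = Fintype.card ι * c := by simp

theorem Finset.card_le_card_pow_of_exists_sub_eq {ι κ R : Type*} [DecidableEq ι] [Mul R]
    [AddGroup R] (α : ι → R) (V : Finset (κ → R)) (V' : Finset (ι × κ → R)) {g : R} (hg : g ≠ 0)
    (T : Finset ι) (hV' : ∀ u ∈ V', ∀ j, ∃ v ∈ V, ∀ i, u (j, i) = α j * v i)
    (hcov : ∀ u ∈ V', ∀ u' ∈ V', u ≠ u' → ∃ q, u q - u' q = g)
    (hT : ∀ j, ∀ v ∈ V, ∀ w ∈ V, ∀ i, α j * v i - α j * w i = g → j ∈ T) :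
    #V' ≤ #V ^ #T := by
  choose! block hblock using hV'
  have hmaps : Set.MapsTo (fun u j (_ : j ∈ T) => block u j) V' (T.pi fun _ => V) :=
    fun u hu => mem_pi.2 fun j _ => (hblock u hu j).1
  have hinj : Set.InjOn (fun u j (_ : j ∈ T) => block u j) V' := by
    intro u hu u' hu' heq
    by_contra hne
    obtain ⟨⟨j, i⟩, hq⟩ := hcov u hu u' hu' hne
    rw [(hblock u hu j).2, (hblock u' hu' j).2] at hq
    have hj : j ∈ T := hT j _ (hblock u hu j).1 _ (hblock u' hu' j).1 i hq
    have hsame : block u j = block u' j := congrFun (congrFun heq j) hj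
    exact hg (by rw [← hq, hsame, sub_self])
  simpa [card_pi] using card_le_card_of_injOn _ hmaps hinj

theorem Nat.cast_le_rpow_of_le_pow {m b n : ℕ} {e : ℝ} (h : m ≤ b ^ n) (hn : (n : ℝ) ≤ e)
    (hb : b = 0 → m = 0 ∨ e = 0) : (m : ℝ) ≤ (b : ℝ) ^ e := by
  rcases b.eq_zero_or_pos with rfl | hb0
  · rcases hb rfl with rfl | rfl
    · simp only [Nat.cast_zero]; positivity
    · have : n = 0 := by exact_mod_cast le_antisymm hn n.cast_nonneg
      subst this
      simpa using h
  · calc (m : ℝ) ≤ (b : ℝ) ^ n := by exact_mod_cast h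
      _ = (b : ℝ) ^ (n : ℝ) := (Real.rpow_natCast _ _).symm
      _ ≤ (b : ℝ) ^ e := Real.rpow_le_rpow_of_exponent_le (by exact_mod_cast hb0) hn

theorem stmt17_general (p k k' z ℓ : ℕ) (hk : 2 ≤ k) (hkk' : k ≤ k')
    (α : Fin z → ZMod p)
    (V : Finset (Fin ℓ → ZMod p))
    (hrange : ∀ v ∈ V, ∀ i, ∃ n : ℕ, n < 2 * k ∧ v i = (n : ZMod p))
    (S' : Finset (ZMod p)) (hS0 : (0 : ZMod p) ∉ S') (hS'card : S'.card = k')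
    (V' : Finset (Fin z × Fin ℓ → ZMod p))
    (hV'W : ∀ u ∈ V', ∀ j : Fin z, ∃ v ∈ V, ∀ i, u (j, i) = α j * v i)
    (hV'cov : ∀ u ∈ V', ∀ u' ∈ V', u ≠ u' → ∀ t ∈ S', ∃ q, u q - u' q = t) :
    (V'.card : ℝ) ≤ (V.card : ℝ) ^ ((4 * k * z : ℝ) / (k' : ℝ)) := by
  obtain ⟨D, hD, hsubD⟩ := exists_card_le_forall_coord_sub_mem hrange
  obtain ⟨g, hg, hT⟩ := exists_mem_card_mul_card_filter_mem_le (s := S') (card_pos.1 (by omega))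
    (fun j => D.image (α j * ·)) (c := 4 * k) fun j => card_image_le.trans (by omega)
  set T := ({j | g ∈ D.image (α j * ·)} : Finset (Fin z))
  have hV' := card_le_card_pow_of_exists_sub_eq α V V' (ne_of_mem_of_not_mem hg hS0) T hV'W
    (fun u hu u' hu' hne => hV'cov u hu u' hu' hne g hg) fun j v hv w hw i hvw =>
      mem_filter.2 ⟨mem_univ j, mem_image.2 ⟨v i - w i, hsubD v hv w hw i, by rw [mul_sub, hvw]⟩⟩
  have hTcard : (#T : ℝ) ≤ (4 * k * z : ℝ) / k' := by
    rw [hS'card, Fintype.card_fin] at hT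
    have : #T * k' ≤ 4 * k * z := by linarith
    rw [le_div_iff₀ (by exact_mod_cast (by omega : 0 < k'))]
    exact_mod_cast this
  refine Nat.cast_le_rpow_of_le_pow hV' hTcard fun hV => ?_
  rcases z.eq_zero_or_pos with rfl | hz
  · simp
  · rw [card_eq_zero] at hV
    exact .inl <| card_eq_zero.2 <| eq_empty_of_forall_notMem fun u hu => by
      simpa [hV] using hV'W u hu ⟨0, hz⟩

/-- Agnostic concatenation procedures boost the size by at most `4kz/k'`: if `V` is a
`[0,k-1]`-covering family with all coordinates in `{0,…,2k-1}`, `S' ⊆ ZMod p \ {0}` has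
size `k'`, and `V'` is an `S'`-covering subset of
`W = {(α₁v₁,…,α_z v_z) : vⱼ ∈ V}`, then `|V'| ≤ |V|^(4kz/k')`. -/
theorem stmt17 (p k k' z ℓ : ℕ) (hp : p.Prime) (hk : 2 ≤ k) (hkk' : k ≤ k') (hk'p : k' ≤ p)
    (α : Fin z → ZMod p) (hα : ∀ j, α j ≠ 0)
    (V : Finset (Fin ℓ → ZMod p))
    (hrange : ∀ v ∈ V, ∀ i, ∃ n : ℕ, n < 2 * k ∧ v i = (n : ZMod p))
    (hVcov : ∀ v ∈ V, ∀ w ∈ V, v ≠ w → ∀ t : ℕ, t ≤ k - 1 → ∃ i, v i - w i = (t : ZMod p))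
    (S' : Finset (ZMod p)) (hS0 : (0 : ZMod p) ∉ S') (hS'card : S'.card = k')
    (V' : Finset (Fin z × Fin ℓ → ZMod p))
    (hV'W : ∀ u ∈ V', ∀ j : Fin z, ∃ v ∈ V, ∀ i, u (j, i) = α j * v i)
    (hV'cov : ∀ u ∈ V', ∀ u' ∈ V', u ≠ u' → ∀ t ∈ S', ∃ q, u q - u' q = t) :
    (V'.card : ℝ) ≤ (V.card : ℝ) ^ ((4 * k * z : ℝ) / (k' : ℝ)) :=
  stmt17_general p k k' z ℓ hk hkk' α V hrange S' hS0 hS'card V' hV'W hV'cov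
end

section
/- Consider the prophet inequality instance on the graph G consisting of r disjoint cliques of size p, where feasible sets are exactly the subsets of cliques (sets of vertices contained in a single clique), each element independently equals 1 with probability 1/p and 0 otherwise, and r = p^p. Then the prophet's expected value, E[max over cliques of the sum of values in that clique], is at least (1 - 1/e)·p, while any online (gambler) strategy has expected value at most 2. -/
/-- Probability weight of an outcome `ω` of `r·p` independent Bernoulli(1/p) variables
arranged into `r` cliques of `p` elements each. -/
noncomputable def khwWeight (p r : ℕ) (ω : Fin r → Fin p → Bool) : ℝ :=
  ∏ j : Fin r, ∏ i : Fin p, (if ω j i then (1 : ℝ) / p else 1 - 1 / p)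

/-- Value of element `e` under outcome `ω`. -/
noncomputable def khwVal (p r : ℕ) (ω : Fin r → Fin p → Bool) (e : Fin r × Fin p) : ℝ :=
  if ω e.1 e.2 then 1 else 0

/-!
Prophet: a clique is all ones with probability `p⁻ᵖ`, independently across the `pᵖ` cliques,
so some clique is all ones, and the prophet collects `p`, with probability
`1 - (1 - p⁻ᵖ)^(pᵖ) ≥ 1 - 1/e`.

Gambler: once an element is accepted, only later elements of its clique can still be accepted.
The first accepted element contributes at most `1`. Whether `e₀` is the first accepted element is
decided by the values revealed up to `e₀`, so it is independent of each later value in its clique;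
each of these at most `p` values has mean `1/p`, so they add at most `1` in expectation.
-/

open Finset

section BernoulliProduct

variable {ι : Type*} [Fintype ι]

noncomputable def bernoulliWeight (q : ℝ) (τ : ι → Bool) : ℝ :=
  ∏ e, if τ e then q else 1 - q

lemma bernoulliWeight_nonneg {q : ℝ} (hq₀ : 0 ≤ q) (hq₁ : q ≤ 1) (τ : ι → Bool) :
    0 ≤ bernoulliWeight q τ :=
  prod_nonneg fun e _ => by split <;> linarith

lemma bernoulliWeight_const_true (q : ℝ) :
    bernoulliWeight q (fun _ : ι => true) = q ^ Fintype.card ι := by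
  simp [bernoulliWeight]

variable [DecidableEq ι]

lemma sum_bernoulliWeight (q : ℝ) : ∑ τ : ι → Bool, bernoulliWeight q τ = 1 := by
  have h := (Fintype.prod_sum fun (_ : ι) (b : Bool) => if b then q else 1 - q).symm
  simp only [bernoulliWeight]
  rw [h]
  simp

noncomputable def bernoulliExpect (q : ℝ) (F : (ι → Bool) → ℝ) : ℝ :=
  ∑ τ, bernoulliWeight q τ * F τ

lemma bernoulliExpect_add (q : ℝ) (F G : (ι → Bool) → ℝ) :
    bernoulliExpect q (fun τ => F τ + G τ) = bernoulliExpect q F + bernoulliExpect q G := by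
  simp only [bernoulliExpect, mul_add, sum_add_distrib]

lemma bernoulliExpect_sum {α : Type*} (q : ℝ) (s : Finset α) (F : α → (ι → Bool) → ℝ) :
    bernoulliExpect q (fun τ => ∑ a ∈ s, F a τ) = ∑ a ∈ s, bernoulliExpect q (F a) := by
  simp only [bernoulliExpect, mul_sum]
  exact sum_comm

lemma bernoulliExpect_const (q c : ℝ) : bernoulliExpect (ι := ι) q (fun _ => c) = c := by
  simp [bernoulliExpect, ← sum_mul, sum_bernoulliWeight]

lemma bernoulliExpect_mono {q : ℝ} (hq₀ : 0 ≤ q) (hq₁ : q ≤ 1) {F G : (ι → Bool) → ℝ}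
    (h : ∀ τ, F τ ≤ G τ) : bernoulliExpect q F ≤ bernoulliExpect q G :=
  sum_le_sum fun τ _ => mul_le_mul_of_nonneg_left (h τ) (bernoulliWeight_nonneg hq₀ hq₁ τ)

lemma bernoulliExpect_nonneg {q : ℝ} (hq₀ : 0 ≤ q) (hq₁ : q ≤ 1) {F : (ι → Bool) → ℝ}
    (h : ∀ τ, 0 ≤ F τ) : 0 ≤ bernoulliExpect q F :=
  sum_nonneg fun τ _ => mul_nonneg (bernoulliWeight_nonneg hq₀ hq₁ τ) (h τ)

lemma bernoulliExpect_not_all_true (q : ℝ) :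
    bernoulliExpect q (fun τ : ι → Bool => if ∀ e, τ e then 0 else 1) =
      1 - q ^ Fintype.card ι := by
  have hall (τ : ι → Bool) : (∀ e, τ e) ↔ τ = fun _ => true := by
    simp [funext_iff]
  simp only [bernoulliExpect, hall, mul_ite, mul_zero, mul_one]
  rw [sum_ite, sum_const_zero, zero_add, filter_ne', sum_erase_eq_sub (mem_univ _),
    sum_bernoulliWeight, bernoulliWeight_const_true]

lemma bernoulliExpect_mul_coord (q : ℝ) (c : ι) {F : (ι → Bool) → ℝ}
    (hF : ∀ τ τ', (∀ e ≠ c, τ e = τ' e) → F τ = F τ') :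
    bernoulliExpect q (fun τ => F τ * if τ c then 1 else 0) = q * bernoulliExpect q F := by
  let E := Equiv.funSplitAt c Bool
  have hweight (b : Bool) (g : {e // e ≠ c} → Bool) : bernoulliWeight q (E.symm (b, g)) =
      (if b then q else 1 - q) * ∏ e : {e // e ≠ c}, if g e then q else 1 - q := by
    rw [bernoulliWeight, Fintype.prod_eq_mul_prod_subtype_ne _ c]
    congr 1
    · simp [E]
    · exact prod_congr rfl fun e _ => by simp [E, e.2]
  have hF' (b : Bool) (g : {e // e ≠ c} → Bool) : F (E.symm (b, g)) = F (E.symm (true, g)) :=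
    hF _ _ fun e he => by simp [E, Equiv.funSplitAt_symm_apply, he]
  simp only [bernoulliExpect, ← E.symm.sum_comp, Fintype.sum_prod_type, Fintype.sum_bool,
    hweight, hF', mul_sum, ← sum_add_distrib]
  refine sum_congr rfl fun g _ => ?_
  simp [E, Equiv.funSplitAt_symm_apply]
  ring

end BernoulliProduct

section Prophet

variable {κ β : Type*} [Fintype κ] [Fintype β]

lemma card_mul_one_sub_prod_le_iSup_sum (ω : κ → β → Bool) :
    (Fintype.card β : ℝ) * (1 - ∏ j, if ∀ i, ω j i then (0 : ℝ) else 1) ≤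
      ⨆ j, ∑ i, if ω j i then (1 : ℝ) else 0 := by
  by_cases h : ∃ j, ∀ i, ω j i
  · obtain ⟨j, hj⟩ := h
    rw [Finset.prod_eq_zero (mem_univ j) (by simp [hj]), sub_zero, mul_one]
    calc (Fintype.card β : ℝ) = ∑ i, if ω j i then (1 : ℝ) else 0 := by simp [hj]
      _ ≤ _ := le_ciSup (f := fun j => ∑ i, if ω j i then (1 : ℝ) else 0)
          (Finite.bddAbove_range _) j
  · rw [prod_eq_one fun j _ => if_neg fun hj => h ⟨j, hj⟩, sub_self, mul_zero]
    exact Real.iSup_nonneg fun j => sum_nonneg fun i _ => by split <;> norm_num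

variable [DecidableEq κ] [DecidableEq β]

lemma sum_prod_bernoulliWeight_mul_prod (q : ℝ) (f : (β → Bool) → ℝ) :
    ∑ ω : κ → β → Bool, (∏ j, bernoulliWeight q (ω j)) * ∏ j, f (ω j) =
      bernoulliExpect q f ^ Fintype.card κ := by
  have h := (Fintype.prod_sum fun (_ : κ) (g : β → Bool) => bernoulliWeight q g * f g).symm
  simp only [← prod_mul_distrib]
  rw [h]
  simp [bernoulliExpect]

theorem prophet_lower_bound {q : ℝ} (hq₀ : 0 ≤ q) (hq₁ : q ≤ 1) :
    (Fintype.card β : ℝ) * (1 - (1 - q ^ Fintype.card β) ^ Fintype.card κ) ≤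
      ∑ ω : κ → β → Bool,
        (∏ j, bernoulliWeight q (ω j)) * ⨆ j, ∑ i, if ω j i then (1 : ℝ) else 0 := by
  have hmass := sum_prod_bernoulliWeight_mul_prod (κ := κ) q fun _ : β → Bool => (1 : ℝ)
  have hnone := sum_prod_bernoulliWeight_mul_prod (κ := κ) q
    fun g : β → Bool => if ∀ i, g i then (0 : ℝ) else 1
  simp only [prod_const_one, mul_one, bernoulliExpect_const, one_pow] at hmass
  rw [bernoulliExpect_not_all_true] at hnone
  calc Fintype.card β * (1 - (1 - q ^ Fintype.card β) ^ Fintype.card κ)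
      = ∑ ω : κ → β → Bool, (∏ j, bernoulliWeight q (ω j)) *
          (Fintype.card β * (1 - ∏ j, if ∀ i, ω j i then 0 else 1)) := by
        simp only [mul_sub, mul_one, sum_sub_distrib, mul_left_comm _ (Fintype.card β : ℝ),
          ← mul_sum, ← sum_mul, hmass, hnone, one_mul]
    _ ≤ _ := sum_le_sum fun ω _ => mul_le_mul_of_nonneg_left
        (card_mul_one_sub_prod_le_iSup_sum ω)
        (prod_nonneg fun j _ => bernoulliWeight_nonneg hq₀ hq₁ _)

end Prophet

section Gambler

variable {κ β : Type*} (σ : κ × β → ℕ) (A : (κ × β → Bool) → Finset (κ × β))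

def IsFirstAccepted (τ : κ × β → Bool) (e₀ : κ × β) : Prop :=
  e₀ ∈ A τ ∧ ∀ e, σ e < σ e₀ → e ∉ A τ

open Classical in
noncomputable def firstAcceptedIndicator (τ : κ × β → Bool) (e₀ : κ × β) : ℝ :=
  if IsFirstAccepted σ A τ e₀ then 1 else 0

variable {σ A}

lemma IsFirstAccepted.unique (hσ : Function.Injective σ) {τ : κ × β → Bool} {e₀ e₁ : κ × β}
    (h₀ : IsFirstAccepted σ A τ e₀) (h₁ : IsFirstAccepted σ A τ e₁) : e₀ = e₁ := by
  by_contra hne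
  rcases lt_or_gt_of_ne (hσ.ne hne) with h | h
  · exact h₁.2 e₀ h h₀.1
  · exact h₀.2 e₁ h h₁.1

lemma isFirstAccepted_congr
    (hA : ∀ τ τ' e, (∀ e', σ e' ≤ σ e → τ e' = τ' e') → (e ∈ A τ ↔ e ∈ A τ'))
    {τ τ' : κ × β → Bool} {e₀ : κ × β} (h : ∀ e, σ e ≤ σ e₀ → τ e = τ' e) :
    IsFirstAccepted σ A τ e₀ ↔ IsFirstAccepted σ A τ' e₀ := by
  have hmem (e) (he : σ e ≤ σ e₀) : e ∈ A τ ↔ e ∈ A τ' :=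
    hA τ τ' e fun e' he' => h e' (he'.trans he)
  exact and_congr (hmem e₀ le_rfl)
    (forall_congr' fun e => imp_congr_right fun he => not_congr (hmem e he.le))

lemma firstAcceptedIndicator_nonneg (τ : κ × β → Bool) (e₀ : κ × β) :
    0 ≤ firstAcceptedIndicator σ A τ e₀ := by
  unfold firstAcceptedIndicator; split <;> norm_num

variable [Fintype κ] [Fintype β]

lemma sum_firstAcceptedIndicator_le_one (hσ : Function.Injective σ) (τ : κ × β → Bool) :
    ∑ e₀, firstAcceptedIndicator σ A τ e₀ ≤ 1 := by
  classical
  simp only [firstAcceptedIndicator, sum_boole]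
  exact_mod_cast card_le_one.mpr fun e₀ h₀ e₁ h₁ =>
    IsFirstAccepted.unique hσ (mem_filter.mp h₀).2 (mem_filter.mp h₁).2

lemma sum_accepted_le (hσ : Function.Injective σ) (hA : ∀ τ, ∃ j, ∀ e ∈ A τ, e.1 = j)
    (τ : κ × β → Bool) :
    ∑ e ∈ A τ, (if τ e then 1 else 0 : ℝ) ≤
      ∑ e₀, firstAcceptedIndicator σ A τ e₀ *
        (1 + ∑ i with σ e₀ < σ (e₀.1, i), if τ (e₀.1, i) then 1 else 0) := by
  classical
  have hval (e : κ × β) : (0 : ℝ) ≤ if τ e then 1 else 0 := by split <;> norm_num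
  have hrhs (e₀ : κ × β) : 0 ≤ firstAcceptedIndicator σ A τ e₀ *
      (1 + ∑ i with σ e₀ < σ (e₀.1, i), if τ (e₀.1, i) then (1 : ℝ) else 0) :=
    mul_nonneg (firstAcceptedIndicator_nonneg τ e₀)
      (add_nonneg zero_le_one (sum_nonneg fun i _ => hval _))
  rcases (A τ).eq_empty_or_nonempty with hempty | hne
  · rw [hempty, sum_empty]
    exact sum_nonneg fun e₀ _ => hrhs e₀
  obtain ⟨e₀, he₀, hmin⟩ := exists_min_image (A τ) σ hne
  obtain ⟨j, hj⟩ := hA τ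
  have hfirst : IsFirstAccepted σ A τ e₀ := ⟨he₀, fun e he hmem => (hmin e hmem).not_gt he⟩
  have hlater : (A τ).erase e₀ ⊆
      ({i | σ e₀ < σ (e₀.1, i)} : Finset β).map (Function.Embedding.sectR e₀.1 β) := by
    intro e he
    obtain ⟨hne, hmem⟩ := mem_erase.mp he
    have he_eq : (e₀.1, e.2) = e := Prod.ext ((hj e₀ he₀).trans (hj e hmem).symm) rfl
    refine mem_map.mpr ⟨e.2, mem_filter.mpr ⟨mem_univ _, ?_⟩, he_eq⟩
    rw [he_eq]
    exact (hmin e hmem).lt_of_ne (hσ.ne hne.symm)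
  calc ∑ e ∈ A τ, (if τ e then 1 else 0 : ℝ)
      = (if τ e₀ then 1 else 0) + ∑ e ∈ (A τ).erase e₀, (if τ e then 1 else 0 : ℝ) :=
        (add_sum_erase _ _ he₀).symm
    _ ≤ 1 + ∑ i with σ e₀ < σ (e₀.1, i), if τ (e₀.1, i) then 1 else 0 := by
        gcongr
        · split <;> norm_num
        · exact (sum_le_sum_of_subset_of_nonneg hlater fun e _ _ => hval e).trans_eq
            (sum_map _ _ _)
    _ = firstAcceptedIndicator σ A τ e₀ *
          (1 + ∑ i with σ e₀ < σ (e₀.1, i), if τ (e₀.1, i) then 1 else 0) := by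
        rw [firstAcceptedIndicator, if_pos hfirst, one_mul]
    _ ≤ _ := single_le_sum (fun e₀ _ => hrhs e₀) (mem_univ e₀)

variable [DecidableEq κ] [DecidableEq β]

lemma bernoulliExpect_firstAcceptedIndicator_mul (q : ℝ)
    (hA : ∀ τ τ' e, (∀ e', σ e' ≤ σ e → τ e' = τ' e') → (e ∈ A τ ↔ e ∈ A τ'))
    {e₀ : κ × β} {i : β} (hi : σ e₀ < σ (e₀.1, i)) :
    bernoulliExpect q (fun τ => firstAcceptedIndicator σ A τ e₀ * if τ (e₀.1, i) then 1 else 0) =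
      q * bernoulliExpect q (fun τ => firstAcceptedIndicator σ A τ e₀) :=
  bernoulliExpect_mul_coord q (e₀.1, i) fun _ _ h => by
    classical
    exact if_congr (isFirstAccepted_congr hA fun e he =>
      h e fun h' => (he.trans_lt hi).ne (congrArg σ h')) rfl rfl

theorem gambler_upper_bound {q : ℝ} (hq₀ : 0 ≤ q) (hq₁ : q ≤ 1) (hσ : Function.Injective σ)
    (hA_clique : ∀ τ, ∃ j, ∀ e ∈ A τ, e.1 = j)
    (hA_adapted : ∀ τ τ' e, (∀ e', σ e' ≤ σ e → τ e' = τ' e') → (e ∈ A τ ↔ e ∈ A τ')) :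
    bernoulliExpect q (fun τ => ∑ e ∈ A τ, if τ e then (1 : ℝ) else 0) ≤
      1 + q * Fintype.card β := by
  have hfirst_nonneg (e₀ : κ × β) :
      0 ≤ bernoulliExpect q (fun τ => firstAcceptedIndicator σ A τ e₀) :=
    bernoulliExpect_nonneg hq₀ hq₁ fun τ => firstAcceptedIndicator_nonneg τ e₀
  calc bernoulliExpect q (fun τ => ∑ e ∈ A τ, if τ e then (1 : ℝ) else 0)
      ≤ bernoulliExpect q (fun τ => ∑ e₀, firstAcceptedIndicator σ A τ e₀ *
          (1 + ∑ i with σ e₀ < σ (e₀.1, i), if τ (e₀.1, i) then 1 else 0)) :=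
        bernoulliExpect_mono hq₀ hq₁ (sum_accepted_le hσ hA_clique)
    _ = ∑ e₀, (1 + q * #{i | σ e₀ < σ (e₀.1, i)}) *
          bernoulliExpect q (fun τ => firstAcceptedIndicator σ A τ e₀) := by
        rw [bernoulliExpect_sum]
        refine sum_congr rfl fun e₀ _ => ?_
        simp only [mul_add, mul_one, mul_sum, bernoulliExpect_add, bernoulliExpect_sum]
        rw [sum_congr rfl fun i hi =>
          bernoulliExpect_firstAcceptedIndicator_mul q hA_adapted (mem_filter.mp hi).2,
          sum_const, nsmul_eq_mul]
        ring
    _ ≤ ∑ e₀, (1 + q * Fintype.card β) *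
          bernoulliExpect q (fun τ => firstAcceptedIndicator σ A τ e₀) := by
        gcongr with e₀
        · exact hfirst_nonneg e₀
        · exact_mod_cast card_le_univ _
    _ = (1 + q * Fintype.card β) *
          bernoulliExpect q (fun τ => ∑ e₀, firstAcceptedIndicator σ A τ e₀) := by
        rw [← mul_sum, bernoulliExpect_sum]
    _ ≤ (1 + q * Fintype.card β) * 1 := by
        gcongr
        calc _ ≤ bernoulliExpect q (fun _ => (1 : ℝ)) :=
              bernoulliExpect_mono hq₀ hq₁ (sum_firstAcceptedIndicator_le_one hσ)
          _ = 1 := bernoulliExpect_const q 1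
    _ = 1 + q * Fintype.card β := mul_one _

end Gambler

lemma khwWeight_eq_prod_bernoulliWeight (p r : ℕ) (ω : Fin r → Fin p → Bool) :
    khwWeight p r ω = ∏ j, bernoulliWeight (1 / p) (ω j) :=
  rfl

lemma sum_khwWeight_mul (p r : ℕ) (H : (Fin r → Fin p → Bool) → ℝ) :
    ∑ ω, khwWeight p r ω * H ω = bernoulliExpect (1 / p) (fun τ => H (Function.curry τ)) := by
  rw [bernoulliExpect, ← (Equiv.curry (Fin r) (Fin p) Bool).sum_comp, Equiv.curry_apply]
  refine sum_congr rfl fun τ _ => ?_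
  rw [khwWeight_eq_prod_bernoulliWeight, bernoulliWeight, Fintype.prod_prod_type]
  rfl

lemma one_sub_inv_exp_mul_le (p : ℕ) :
    (1 - 1 / Real.exp 1) * p ≤ p * (1 - (1 - (1 / p : ℝ) ^ p) ^ (p ^ p)) := by
  have hpow : (1 / p : ℝ) ^ p = 1 / ↑(p ^ p) := by push_cast; exact one_div_pow _ _
  have hlim : (1 - 1 / ↑(p ^ p) : ℝ) ^ (p ^ p) ≤ 1 / Real.exp 1 := by
    rw [one_div (Real.exp 1), ← Real.exp_neg]
    exact Real.one_sub_div_pow_le_exp_neg (by exact_mod_cast Nat.pow_self_pos)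
  rw [hpow, mul_comm]
  exact mul_le_mul_of_nonneg_left (by linarith) (Nat.cast_nonneg p)

theorem stmt18_general (p : ℕ) :
    ((1 - 1 / Real.exp 1) * p ≤
      ∑ ω : Fin (p ^ p) → Fin p → Bool,
        khwWeight p (p ^ p) ω * ⨆ j : Fin (p ^ p), ∑ i : Fin p, khwVal p (p ^ p) ω (j, i)) ∧
    ∀ σ : Fin (p ^ p) × Fin p → ℕ, Function.Injective σ →
      ∀ A : (Fin (p ^ p) → Fin p → Bool) → Finset (Fin (p ^ p) × Fin p),
        (∀ ω, ∃ j, ∀ e ∈ A ω, e.1 = j) →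
        (∀ ω ω' e, (∀ e', σ e' ≤ σ e → ω e'.1 e'.2 = ω' e'.1 e'.2) →
          (e ∈ A ω ↔ e ∈ A ω')) →
        ∑ ω : Fin (p ^ p) → Fin p → Bool,
          khwWeight p (p ^ p) ω * ∑ e ∈ A ω, khwVal p (p ^ p) ω e ≤ 2 := by
  have hq₀ : (0 : ℝ) ≤ 1 / p := by positivity
  have hq₁ : (1 : ℝ) / p ≤ 1 := by rw [one_div]; exact Nat.cast_inv_le_one p
  refine ⟨(one_sub_inv_exp_mul_le p).trans ?_, fun σ hσ A hA_clique hA_adapted => ?_⟩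
  · have hprophet := prophet_lower_bound (κ := Fin (p ^ p)) (β := Fin p) hq₀ hq₁
    rw [Fintype.card_fin, Fintype.card_fin] at hprophet
    exact hprophet
  · rw [sum_khwWeight_mul]
    have hgambler := gambler_upper_bound (A := fun τ => A (Function.curry τ)) hq₀ hq₁ hσ
      (fun _ => hA_clique _) (fun _ _ e h => hA_adapted _ _ e h)
    have hqp : 1 / p * (p : ℝ) ≤ 1 := by
      rw [one_div]; exact inv_mul_le_one_of_le₀ le_rfl (Nat.cast_nonneg p)
    rw [Fintype.card_fin] at hgambler
    exact hgambler.trans (by linarith)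

/-- In the Kleinberg–Weinberg instance with `r = p^p` cliques of size `p`, feasible sets
being subsets of single cliques, and i.i.d. Bernoulli(1/p) values: the prophet's expected
value is at least `(1 - 1/e)·p`, while every online (adapted, feasible) strategy—over any
arrival order—has expected value at most `2`. -/
theorem stmt18 (p : ℕ) (hp : p.Prime) :
    ((1 - 1 / Real.exp 1) * p ≤
      ∑ ω : Fin (p ^ p) → Fin p → Bool,
        khwWeight p (p ^ p) ω * ⨆ j : Fin (p ^ p), ∑ i : Fin p, khwVal p (p ^ p) ω (j, i)) ∧
    ∀ σ : Fin (p ^ p) × Fin p → ℕ, Function.Injective σ →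
      ∀ A : (Fin (p ^ p) → Fin p → Bool) → Finset (Fin (p ^ p) × Fin p),
        (∀ ω, ∃ j, ∀ e ∈ A ω, e.1 = j) →
        (∀ ω ω' e, (∀ e', σ e' ≤ σ e → ω e'.1 e'.2 = ω' e'.1 e'.2) →
          (e ∈ A ω ↔ e ∈ A ω')) →
        ∑ ω : Fin (p ^ p) → Fin p → Bool,
          khwWeight p (p ^ p) ω * ∑ e ∈ A ω, khwVal p (p ^ p) ω e ≤ 2 :=
  stmt18_general p
end

section
/- Let p be prime, ℓ₀ a positive multiple of 2(p-1), and define A₀ ⊆ (Z/pZ)^{ℓ₀} to be the set of vectors whose first 2ℓ₀/(p-1) coordinates use only the values 1 and 2 each exactly ℓ₀/(p-1) times, whose next 2ℓ₀/(p-1) coordinates use only the values 3 and 4 each exactly ℓ₀/(p-1) times, and so on through the pair (p-2, p-1). Then A₀ is {1}-covering (every pair of distinct vectors has some coordinate difference equal to 1 mod p) and |A₀| = C(2ℓ₀/(p-1), ℓ₀/(p-1))^{(p-1)/2}. -/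
/-!
A vector of `A₀` is determined by the set of coordinates at which it takes the lower value
`2t+1` of its block `t`, and this set meets every block in exactly `ℓ/(p-1)` coordinates;
choosing these subsets independently in the `(p-1)/2` blocks of length `2ℓ/(p-1)` gives the
binomial power. If distinct `v, w ∈ A₀` had no coordinate with `v i - w i = 1`, then in a block
where they differ the lower-value set of `w` would lie inside that of `v`; both have the same
size, so they coincide, contradicting a coordinate where `v` is lower and `w` is upper.
-/

open scoped Classical in
/-- The base family `A₀`: vectors in `(ZMod p)^ℓ` whose `t`-th block of
`2ℓ/(p-1)` coordinates uses only the values `2t+1` and `2t+2`, each exactly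
`ℓ/(p-1)` times. -/
noncomputable def baseFamily (p ℓ : ℕ) [NeZero p] : Finset (Fin ℓ → ZMod p) :=
  Finset.univ.filter fun b =>
    (∀ i : Fin ℓ,
      b i = ((2 * ((i : ℕ) / (2 * ℓ / (p - 1))) + 1 : ℕ) : ZMod p) ∨
      b i = ((2 * ((i : ℕ) / (2 * ℓ / (p - 1))) + 2 : ℕ) : ZMod p)) ∧
    ∀ t : ℕ, t < (p - 1) / 2 →
      (Finset.univ.filter fun i : Fin ℓ =>
        (i : ℕ) / (2 * ℓ / (p - 1)) = t ∧ b i = ((2 * t + 1 : ℕ) : ZMod p)).card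
        = ℓ / (p - 1)

open Finset

section BlockFamily

variable {ι κ R : Type*} [Fintype ι] [DecidableEq ι] [DecidableEq κ]

theorem card_filter_fiber_card_eq_prod_choose (blk : ι → κ) (S : Finset κ) (hS : ∀ i, blk i ∈ S)
    (n : κ → ℕ) :
    #{s : Finset ι | ∀ t ∈ S, #{i ∈ s | blk i = t} = n t} =
      ∏ t ∈ S, (#{i | blk i = t}).choose (n t) := by
  simp_rw [← card_powersetCard, ← card_pi]
  have filter_eq {f : (t : κ) → t ∈ S → Finset ι}
      (hf : f ∈ S.pi fun t => powersetCard (n t) {i | blk i = t}) (t : κ) (ht : t ∈ S) :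
      {i ∈ univ.filter fun i => i ∈ f (blk i) (hS i) | blk i = t} = f t ht := by
    ext i
    have hft := (mem_powersetCard.1 (mem_pi.1 hf t ht)).1
    simp only [mem_filter, mem_univ, true_and]
    constructor
    · rintro ⟨hi, rfl⟩
      exact hi
    · intro hi
      obtain rfl : blk i = t := by simpa using hft hi
      exact ⟨hi, rfl⟩
  refine card_nbij' (fun s t _ => {i ∈ s | blk i = t})
    (fun f => univ.filter fun i => i ∈ f (blk i) (hS i)) ?_ ?_ ?_ ?_
  · intro s hs
    simp only [coe_filter, mem_univ, true_and, Set.mem_ofPred_eq] at hs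
    simp only [mem_coe, mem_pi, mem_powersetCard]
    refine fun t ht => ⟨fun i hi => ?_, hs t ht⟩
    simp only [mem_filter, mem_univ, true_and] at hi ⊢
    exact hi.2
  · intro f hf
    simp only [coe_filter, mem_univ, true_and, Set.mem_ofPred_eq]
    intro t ht
    rw [filter_eq hf t ht]
    exact (mem_powersetCard.1 (mem_pi.1 hf t ht)).2
  · intro s _
    ext i
    simp
  · intro f hf
    funext t ht
    exact filter_eq hf t ht

variable [Fintype R] [DecidableEq R]

def blockFamily (blk : ι → κ) (lo hi : κ → R) (S : Finset κ) (n : κ → ℕ) : Finset (ι → R) :=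
  {b | (∀ i, b i = lo (blk i) ∨ b i = hi (blk i)) ∧
    ∀ t ∈ S, #{i | blk i = t ∧ b i = lo t} = n t}

theorem card_blockFamily {blk : ι → κ} {lo hi : κ → R} (hlo : ∀ t, lo t ≠ hi t) {S : Finset κ}
    (hS : ∀ i, blk i ∈ S) (n : κ → ℕ) :
    #(blockFamily blk lo hi S n) = ∏ t ∈ S, (#{i | blk i = t}).choose (n t) := by
  rw [← card_filter_fiber_card_eq_prod_choose blk S hS n]
  have lower_eq (b : ι → R) (t : κ) :
      {i ∈ univ.filter fun i => b i = lo (blk i) | blk i = t} =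
        ({i | blk i = t ∧ b i = lo t} : Finset ι) := by
    ext i
    simp only [mem_filter, mem_univ, true_and]
    constructor
    · rintro ⟨hi, rfl⟩
      exact ⟨rfl, hi⟩
    · rintro ⟨rfl, hi⟩
      exact ⟨hi, rfl⟩
  refine card_nbij' (fun b => univ.filter fun i => b i = lo (blk i))
    (fun s i => if i ∈ s then lo (blk i) else hi (blk i)) ?_ ?_ ?_ ?_
  · intro b hb
    simp only [blockFamily, coe_filter, mem_univ, true_and, Set.mem_ofPred_eq] at hb ⊢
    intro t ht
    rw [lower_eq, hb.2 t ht]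
  · intro s hs
    simp only [blockFamily, coe_filter, mem_univ, true_and, Set.mem_ofPred_eq] at hs ⊢
    refine ⟨fun i => ?_, fun t ht => ?_⟩
    · by_cases hi : i ∈ s <;> simp [hi]
    · rw [← hs t ht, ← lower_eq]
      congr 1
      ext i
      by_cases hi : i ∈ s <;> simp [hi, (hlo _).symm]
  · intro b hb
    simp only [blockFamily, coe_filter, mem_univ, true_and, Set.mem_ofPred_eq] at hb
    funext i
    rcases hb.1 i with h | h <;> simp [h, (hlo _).symm]
  · intro s _
    ext i
    by_cases hi : i ∈ s <;> simp [hi, (hlo _).symm]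

theorem exists_sub_eq_of_mem_blockFamily [AddCommGroup R] {blk : ι → κ} {lo : κ → R} {d : R}
    (hd : d ≠ 0) {S : Finset κ} (hS : ∀ i, blk i ∈ S) {n : κ → ℕ} {b b' : ι → R}
    (hb : b ∈ blockFamily blk lo (fun t => lo t + d) S n)
    (hb' : b' ∈ blockFamily blk lo (fun t => lo t + d) S n) (hne : b ≠ b') :
    ∃ i, b i - b' i = d := by
  simp only [blockFamily, mem_filter, mem_univ, true_and] at hb hb'
  by_contra! hno
  obtain ⟨i, hi⟩ := Function.ne_iff.1 hne
  have hd' : lo (blk i) + d ≠ lo (blk i) := by simpa using hd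
  rcases hb.1 i with hbi | hbi <;> rcases hb'.1 i with hb'i | hb'i
  · exact hi (hbi.trans hb'i.symm)
  · -- where `b'` takes the lower value of the block, so does `b`; equal counts force equality
    have hsub : ({j | blk j = blk i ∧ b' j = lo (blk i)} : Finset ι) ⊆
        ({j | blk j = blk i ∧ b j = lo (blk i)} : Finset ι) := by
      intro j hj
      simp only [mem_filter, mem_univ, true_and] at hj ⊢
      obtain ⟨hji, hb'j⟩ := hj
      rw [← hji] at hb'j ⊢
      refine ⟨rfl, (hb.1 j).resolve_right fun hbj => hno j ?_⟩
      rw [hbj, hb'j, add_sub_cancel_left]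
    have heq := eq_of_subset_of_card_le hsub
      (by rw [hb.2 _ (hS i), hb'.2 _ (hS i)])
    have : i ∈ ({j | blk j = blk i ∧ b j = lo (blk i)} : Finset ι) := by simp [hbi]
    rw [← heq] at this
    simp only [mem_filter, mem_univ, true_and] at this
    exact hd' (hb'i.symm.trans this)
  · exact hno i (by rw [hbi, hb'i, add_sub_cancel_left])
  · exact hi (hbi.trans hb'i.symm)

end BlockFamily

theorem Fin.card_filter_val_div_eq {N k B t : ℕ} (hN : N = k * B) (ht : t < k) :
    #{i : Fin N | (i : ℕ) / B = t} = B := by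
  subst hN
  rcases B.eq_zero_or_pos with rfl | hB
  · simp
  have hlt (j : Fin B) : t * B + j < k * B :=
    calc t * B + j < (t + 1) * B := by rw [add_one_mul]; exact Nat.add_lt_add_left j.isLt _
      _ ≤ k * B := Nat.mul_le_mul_right B ht
  have hdiv (j : Fin B) : (t * B + j) / B = t := by
    rw [mul_comm, Nat.mul_add_div hB, Nat.div_eq_of_lt j.isLt, add_zero]
  calc _ = #(univ : Finset (Fin B)) := by
        refine card_nbij' (fun i => ⟨i % B, Nat.mod_lt _ hB⟩) (fun j => ⟨t * B + j, hlt j⟩)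
          (fun _ _ => mem_coe.2 (mem_univ _)) (fun j _ => by simp [hdiv]) (fun i hi => ?_)
          (fun j _ => ?_)
        · simp only [coe_filter, mem_univ, true_and, Set.mem_ofPred_eq] at hi
          ext
          simp [← hi, Nat.div_add_mod']
        · ext
          simp [Nat.mod_eq_of_lt j.isLt]
    _ = B := card_fin B

theorem baseFamily_eq_blockFamily (p ℓ : ℕ) [NeZero p] :
    baseFamily p ℓ = blockFamily (fun i : Fin ℓ => (i : ℕ) / (2 * ℓ / (p - 1)))
      (fun t => ((2 * t + 1 : ℕ) : ZMod p)) (fun t => ((2 * t + 1 : ℕ) : ZMod p) + 1)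
      (range ((p - 1) / 2)) (fun _ => ℓ / (p - 1)) := by
  ext b
  simp [baseFamily, blockFamily, add_assoc, one_add_one_eq_two]

theorem eq_pred_div_two_mul_two_mul_div_pred {p ℓ : ℕ} (hodd : Odd p) (hdvd : 2 * (p - 1) ∣ ℓ) :
    ℓ = (p - 1) / 2 * (2 * ℓ / (p - 1)) := by
  obtain ⟨c, rfl⟩ := hdvd
  obtain ⟨a, rfl⟩ := hodd
  rcases a.eq_zero_or_pos with rfl | ha
  · simp
  rw [Nat.add_sub_cancel, Nat.mul_div_cancel_left a two_pos,
    show 2 * (2 * (2 * a) * c) = 2 * a * (4 * c) by ring, Nat.mul_div_cancel_left _ (by omega)]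
  ring

theorem stmt19_general (p ℓ : ℕ) [NeZero p] (hp : p.Prime) (hodd : Odd p)
    (hdvd : 2 * (p - 1) ∣ ℓ) :
    (∀ v ∈ baseFamily p ℓ, ∀ w ∈ baseFamily p ℓ, v ≠ w → ∃ i, v i - w i = 1) ∧
    (baseFamily p ℓ).card =
      (Nat.choose (2 * ℓ / (p - 1)) (ℓ / (p - 1))) ^ ((p - 1) / 2) := by
  have : Fact (1 < p) := ⟨hp.one_lt⟩
  have hlen := eq_pred_div_two_mul_two_mul_div_pred hodd hdvd
  have hblk (i : Fin ℓ) : (i : ℕ) / (2 * ℓ / (p - 1)) ∈ range ((p - 1) / 2) :=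
    mem_range.2 (Nat.div_lt_of_lt_mul (by rw [mul_comm, ← hlen]; exact i.isLt))
  rw [baseFamily_eq_blockFamily]
  refine ⟨fun v hv w hw hvw => exists_sub_eq_of_mem_blockFamily one_ne_zero hblk hv hw hvw, ?_⟩
  rw [card_blockFamily (fun _ => left_ne_add.2 one_ne_zero) hblk,
    prod_congr rfl fun t ht => by rw [Fin.card_filter_val_div_eq hlen (mem_range.1 ht)],
    prod_const, card_range]

/-- `A₀` is `{1}`-covering and has size `C(2ℓ/(p-1), ℓ/(p-1))^((p-1)/2)`. -/
theorem stmt19 (p ℓ : ℕ) [NeZero p] (hp : p.Prime) (hodd : Odd p) (hℓ : 0 < ℓ)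
    (hdvd : 2 * (p - 1) ∣ ℓ) :
    (∀ v ∈ baseFamily p ℓ, ∀ w ∈ baseFamily p ℓ, v ≠ w → ∃ i, v i - w i = 1) ∧
    (baseFamily p ℓ).card =
      (Nat.choose (2 * ℓ / (p - 1)) (ℓ / (p - 1))) ^ ((p - 1) / 2) :=
  stmt19_general p ℓ hp hodd hdvd
end
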